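/- arXiv:1405.6894 — 10 statements merged into one kernel-verified Lean document; each statement's English description precedes it below -/
import Mathlib

section
/- The permutation τ_{k,n} of [n], obtained by concatenating k increasing runs of lengths ⌊n/k⌋ or ⌈n/k⌉ in decreasing order of values (so that it contains no decreasing subsequence of length k+1), contains exactly r·C(⌈n/k⌉, k+1) + (k−r)·C(⌊n/k⌋, k+1) monotone subsequences of length k+1, where r ∈ {0,...,k−1} satisfies r ≡ n (mod k). -/
/-- The value (0-indexed) at position `p` (0-indexed) of the permutation `τ_{k,n}`,
obtained by concatenating the `k` increasing blocks of values
`⌊i·n/k⌋, …, ⌊(i+1)·n/k⌋ - 1` for `i = k-1` down to `0`. -/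
def tauVal (k n p : ℕ) : ℕ :=
  let b := ((n - p) * k - 1) / n
  b * n / k + (p + (b + 1) * n / k - n)

/-!
`τ_{k,n}` is a concatenation of `k` increasing blocks whose values decrease from block to block.
Two entries of one block form an ascent, so a decreasing subsequence meets every block at most
once and has at most `k` terms; an increasing subsequence cannot meet two blocks, since the later
block has the smaller values. Hence the monotone subsequences of length `k+1` are exactly the
`(k+1)`-subsets of single blocks, and their number is `∑_b C(ℓ_b, k+1)` over the block lengths
`ℓ_b = ⌊(b+1)n/k⌋ - ⌊bn/k⌋`. Each `ℓ_b` is `⌊n/k⌋` or `⌊n/k⌋ + 1` and they sum to `n`, so exactly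
`n mod k` of them equal `⌈n/k⌉`.
-/

open Finset

section Layers

variable {α β ι : Type*} [LinearOrder α] [Preorder β] {f : α → β} {g : α → ι} {s : Set α}

theorem StrictAntiOn.injOn_of_strictMonoOn_fibers
    (hsame : ∀ ⦃x y⦄, x < y → g x = g y → f x < f y) (h : StrictAntiOn f s) : s.InjOn g := by
  intro x hx y hy hxy
  by_contra hne
  rcases lt_or_gt_of_ne hne with hlt | hlt
  · exact lt_asymm (h hx hy hlt) (hsame hlt hxy)
  · exact lt_asymm (h hy hx hlt) (hsame hlt hxy.symm)

theorem strictMonoOn_iff_exists_forall_eq [LinearOrder ι] (hg : Antitone g)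
    (hsame : ∀ ⦃x y⦄, x < y → g x = g y → f x < f y) (hdiff : ∀ ⦃x y⦄, g x < g y → f x < f y)
    (hs : s.Nonempty) : StrictMonoOn f s ↔ ∃ b, ∀ x ∈ s, g x = b := by
  constructor
  · intro h
    have hle : ∀ ⦃x y⦄, x ∈ s → y ∈ s → x < y → g x = g y := fun x y hx hy hlt =>
      (hg hlt.le).lt_or_eq.elim (fun hgt => absurd (h hx hy hlt) (lt_asymm (hdiff hgt))) Eq.symm
    obtain ⟨x₀, hx₀⟩ := hs
    refine ⟨g x₀, fun x hx => ?_⟩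
    rcases lt_trichotomy x x₀ with hlt | rfl | hlt
    · exact hle hx hx₀ hlt
    · rfl
    · exact (hle hx₀ hx hlt).symm
  · rintro ⟨b, hb⟩ x hx y hy hlt
    exact hsame hlt ((hb x hx).trans (hb y hy).symm)

theorem strictMonoOn_or_strictAntiOn_iff_exists_forall_eq [LinearOrder ι] (hg : Antitone g)
    (hsame : ∀ ⦃x y⦄, x < y → g x = g y → f x < f y) (hdiff : ∀ ⦃x y⦄, g x < g y → f x < f y)
    {t : Finset ι} (hgt : ∀ x, g x ∈ t) {u : Finset α} (hu : #t < #u) :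
    StrictMonoOn f u ∨ StrictAntiOn f u ↔ ∃ b, ∀ x ∈ u, g x = b := by
  have hne : (u : Set α).Nonempty := coe_nonempty.mpr (card_pos.mp (by omega))
  have hmono := strictMonoOn_iff_exists_forall_eq hg hsame hdiff hne
  simp only [mem_coe] at hmono
  rw [← hmono, or_iff_left]
  intro hanti
  exact hu.not_ge
    (card_le_card_of_injOn g (fun x _ => hgt x) (hanti.injOn_of_strictMonoOn_fibers hsame))

end Layers

theorem ncard_setOf_card_eq_exists_forall_eq {α ι : Type*} [Fintype α] [DecidableEq α]
    [DecidableEq ι] (g : α → ι) (t : Finset ι) (hgt : ∀ x, g x ∈ t) (m : ℕ) :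
    {s : Finset α | #s = m + 1 ∧ ∃ b, ∀ x ∈ s, g x = b}.ncard =
      ∑ b ∈ t, (#{x | g x = b}).choose (m + 1) := by
  have hset : {s : Finset α | #s = m + 1 ∧ ∃ b, ∀ x ∈ s, g x = b} =
      ↑(t.biUnion fun b => powersetCard (m + 1) {x | g x = b}) := by
    ext s
    simp only [Set.mem_ofPred_eq, coe_biUnion, mem_coe, Set.mem_iUnion, mem_powersetCard,
      subset_iff, mem_filter_univ, exists_prop]
    constructor
    · rintro ⟨hcard, b, hb⟩
      obtain ⟨x, hx⟩ := card_pos.mp (by omega : 0 < #s)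
      exact ⟨b, hb x hx ▸ hgt x, hb, hcard⟩
    · rintro ⟨b, -, hb, hcard⟩
      exact ⟨hcard, b, hb⟩
  rw [hset, Set.ncard_coe_finset, card_biUnion]
  · simp only [card_powersetCard]
  · intro b₁ _ b₂ _ hne
    refine disjoint_left.mpr fun s hs₁ hs₂ => ?_
    rw [mem_powersetCard] at hs₁ hs₂
    obtain ⟨x, hx⟩ := card_pos.mp (by omega : 0 < #s)
    exact hne (((mem_filter_univ x).mp (hs₁.1 hx)).symm.trans ((mem_filter_univ x).mp (hs₂.1 hx)))

theorem sum_comp_add_of_le_one {ι : Type*} (s : Finset ι) (e : ι → ℕ) (he : ∀ i ∈ s, e i ≤ 1)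
    (φ : ℕ → ℕ) (q : ℕ) :
    ∑ i ∈ s, φ (q + e i) = (∑ i ∈ s, e i) * φ (q + 1) + (#s - ∑ i ∈ s, e i) * φ q := by
  have hsplit : ∀ i ∈ s, φ (q + e i) = e i * φ (q + 1) + (1 - e i) * φ q := by
    intro i hi
    rcases Nat.le_one_iff_eq_zero_or_eq_one.mp (he i hi) with h | h <;> simp [h]
  rw [sum_congr rfl hsplit, sum_add_distrib, ← sum_mul, ← sum_mul, sum_tsub_distrib s he,
    card_eq_sum_ones]

section BlockLengths

variable {k : ℕ}

theorem div_le_succ_mul_div_sub_mul_div (k n b : ℕ) : n / k ≤ (b + 1) * n / k - b * n / k := by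
  have h := Nat.div_add_div_le_add_div (x := b * n) (y := n) (z := k)
  rw [← add_one_mul] at h
  omega

theorem succ_mul_div_sub_mul_div_le (k n b : ℕ) : (b + 1) * n / k - b * n / k ≤ n / k + 1 := by
  have h := Nat.add_div_le_div_add_div_add_one (b * n) n k
  rw [← add_one_mul] at h
  exact Nat.sub_le_iff_le_add'.mpr (by rwa [add_assoc] at h)

theorem sum_range_succ_mul_div_sub_mul_div (hk : 0 < k) (n : ℕ) :
    ∑ b ∈ range k, ((b + 1) * n / k - b * n / k) = n := by
  have hmono : Monotone fun b => b * n / k :=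
    fun _ _ h => Nat.div_le_div_right (Nat.mul_le_mul_right n h)
  rw [sum_range_tsub hmono, Nat.mul_div_cancel_left n hk]
  simp

theorem sum_range_choose_succ_mul_div_sub_mul_div (hk : 0 < k) (n m : ℕ) :
    ∑ b ∈ range k, ((b + 1) * n / k - b * n / k).choose m =
      n % k * (n / k + 1).choose m + (k - n % k) * (n / k).choose m := by
  obtain ⟨e, he, hlen⟩ : ∃ e : ℕ → ℕ, (∀ b ∈ range k, e b ≤ 1) ∧
      ∀ b, (b + 1) * n / k - b * n / k = n / k + e b := by
    refine ⟨fun b => (b + 1) * n / k - b * n / k - n / k, fun b _ => ?_, fun b => ?_⟩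
    · exact Nat.sub_le_iff_le_add'.mpr (succ_mul_div_sub_mul_div_le k n b)
    · exact (Nat.add_sub_cancel' (div_le_succ_mul_div_sub_mul_div k n b)).symm
  have hsum : ∑ b ∈ range k, e b = n % k := by
    have h := sum_range_succ_mul_div_sub_mul_div hk n
    rw [sum_congr rfl fun b _ => hlen b, sum_add_distrib, sum_const, card_range,
      smul_eq_mul] at h
    have := Nat.div_add_mod n k
    omega
  rw [sum_congr rfl fun b _ => by rw [hlen b], sum_comp_add_of_le_one _ e he (·.choose m), hsum,
    card_range]

theorem add_sub_one_div_eq_div_add_one (hk : 0 < k) {n : ℕ} (h : n % k ≠ 0) :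
    (n + k - 1) / k = n / k + 1 := by
  have hsplit : n + k - 1 = (n % k - 1) + k * (n / k + 1) := by
    have := Nat.div_add_mod n k
    rw [Nat.mul_succ]
    omega
  rw [hsplit, Nat.add_mul_div_left _ _ hk, Nat.div_eq_of_lt (by have := Nat.mod_lt n hk; omega),
    zero_add]

end BlockLengths

section Tau

/-- The block of `τ_{k,n}` containing position `p`: block `b` holds the values
`[⌊b n/k⌋, ⌊(b+1) n/k⌋)`, in increasing order, at the positions `[n - ⌊(b+1) n/k⌋, n - ⌊b n/k⌋)`. -/
def tauBlock (k n p : ℕ) : ℕ := ((n - p) * k - 1) / n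

variable {k n p q b : ℕ}

theorem tauVal_eq (k n p : ℕ) :
    tauVal k n p = tauBlock k n p * n / k + (p + (tauBlock k n p + 1) * n / k - n) := rfl

theorem tauBlock_lt (hk : 0 < k) (hp : p < n) : tauBlock k n p < k := by
  have h : (n - p) * k ≤ n * k := Nat.mul_le_mul_right _ (Nat.sub_le _ _)
  have hpos : 0 < n * k := Nat.mul_pos (by omega) hk
  exact (Nat.div_lt_iff_lt_mul (by omega)).mpr (by rw [mul_comm k n]; omega)

theorem tauBlock_antitone : Antitone (tauBlock k n) := fun _ _ hpq =>
  Nat.div_le_div_right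
    (Nat.sub_le_sub_right (Nat.mul_le_mul_right _ (Nat.sub_le_sub_left hpq n)) 1)

theorem tauBlock_bounds (hk : 0 < k) (hp : p < n) :
    n - (tauBlock k n p + 1) * n / k ≤ p ∧ p < n - tauBlock k n p * n / k := by
  have hpos : 1 ≤ (n - p) * k := Nat.mul_pos (by omega) hk
  have hlo : tauBlock k n p * n ≤ (n - p) * k - 1 := Nat.div_mul_le_self _ _
  have hhi : (n - p) * k - 1 < n * (tauBlock k n p + 1) := Nat.lt_mul_div_succ _ (by omega)
  have h₁ : tauBlock k n p * n / k < n - p := (Nat.div_lt_iff_lt_mul hk).mpr (by omega)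
  have h₂ : n - p ≤ (tauBlock k n p + 1) * n / k :=
    (Nat.le_div_iff_mul_le hk).mpr (by rw [mul_comm _ n]; omega)
  omega

theorem tauBlock_eq_iff (hk : 0 < k) (hp : p < n) :
    tauBlock k n p = b ↔ n - (b + 1) * n / k ≤ p ∧ p < n - b * n / k := by
  refine ⟨fun h => h ▸ tauBlock_bounds hk hp, fun ⟨hlo, hhi⟩ => ?_⟩
  have h₁ : b * n < (n - p) * k := (Nat.div_lt_iff_lt_mul hk).mp (by omega)
  have h₂ : (n - p) * k ≤ (b + 1) * n := (Nat.le_div_iff_mul_le hk).mp (by omega)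
  exact Nat.div_eq_of_lt_le (by omega) (by omega)

theorem tauVal_lt_of_tauBlock_eq (hk : 0 < k) (hq : q < n) (hpq : p < q)
    (h : tauBlock k n p = tauBlock k n q) : tauVal k n p < tauVal k n q := by
  have hp := tauBlock_bounds hk (hpq.trans hq)
  rw [h] at hp
  rw [tauVal_eq, tauVal_eq, h]
  omega

theorem tauVal_lt_of_tauBlock_lt (hk : 0 < k) (hp : p < n)
    (h : tauBlock k n p < tauBlock k n q) : tauVal k n p < tauVal k n q := by
  have hp' := tauBlock_bounds hk hp
  have hmono : (tauBlock k n p + 1) * n / k ≤ tauBlock k n q * n / k :=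
    Nat.div_le_div_right (Nat.mul_le_mul_right _ h)
  rw [tauVal_eq, tauVal_eq]
  omega

theorem card_filter_tauBlock_eq (hk : 0 < k) (hb : b < k) :
    #{p : Fin n | tauBlock k n p = b} = (b + 1) * n / k - b * n / k := by
  have hmono : b * n / k ≤ (b + 1) * n / k := Nat.div_le_div_right (by nlinarith)
  have hle : (b + 1) * n / k ≤ n := Nat.div_le_of_le_mul (by nlinarith)
  have hmap : ({p : Fin n | tauBlock k n p = b} : Finset (Fin n)).map Fin.valEmbedding =
      Ico (n - (b + 1) * n / k) (n - b * n / k) := by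
    ext x
    simp only [mem_map, mem_filter_univ, Fin.valEmbedding_apply, mem_Ico]
    constructor
    · rintro ⟨p, hp, rfl⟩
      exact (tauBlock_eq_iff hk p.2).mp hp
    · intro hx
      have hxn : x < n := hx.2.trans_le (Nat.sub_le _ _)
      exact ⟨⟨x, hxn⟩, (tauBlock_eq_iff hk hxn).mpr hx, rfl⟩
  rw [← card_map Fin.valEmbedding, hmap, Nat.card_Ico]
  omega

end Tau

theorem stmt_1_general (k n : ℕ) (hk : 0 < k) :
    Set.ncard {s : Finset (Fin n) | s.card = k + 1 ∧
        (StrictMonoOn (fun p : Fin n => tauVal k n p) (↑s : Set (Fin n)) ∨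
          StrictAntiOn (fun p : Fin n => tauVal k n p) (↑s : Set (Fin n)))} =
      n % k * Nat.choose ((n + k - 1) / k) (k + 1) +
        (k - n % k) * Nat.choose (n / k) (k + 1) := by
  set f : Fin n → ℕ := fun p => tauVal k n p
  set g : Fin n → ℕ := fun p => tauBlock k n p
  have hg : Antitone g := tauBlock_antitone.comp_monotone Fin.val_strictMono.monotone
  have hg_mem : ∀ p, g p ∈ range k := fun p => mem_range.mpr (tauBlock_lt hk p.2)
  have hsame : ∀ ⦃x y⦄, x < y → g x = g y → f x < f y :=
    fun _ y hxy h => tauVal_lt_of_tauBlock_eq hk y.2 hxy h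
  have hdiff : ∀ ⦃x y⦄, g x < g y → f x < f y := fun x _ h => tauVal_lt_of_tauBlock_lt hk x.2 h
  have hset : {s : Finset (Fin n) | #s = k + 1 ∧ (StrictMonoOn f s ∨ StrictAntiOn f s)} =
      {s | #s = k + 1 ∧ ∃ b, ∀ p ∈ s, g p = b} := by
    ext s
    exact and_congr_right fun hs => strictMonoOn_or_strictAntiOn_iff_exists_forall_eq hg hsame
      hdiff hg_mem (by rw [hs, card_range]; omega)
  rw [hset, ncard_setOf_card_eq_exists_forall_eq g (range k) hg_mem,
    sum_congr rfl fun b hb =>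
      congrArg (·.choose (k + 1)) (card_filter_tauBlock_eq hk (mem_range.mp hb)),
    sum_range_choose_succ_mul_div_sub_mul_div hk]
  rcases eq_or_ne (n % k) 0 with hr | hr
  · simp [hr]
  · rw [add_sub_one_div_eq_div_add_one hk hr]

/-- `τ_{k,n}` contains exactly `r·C(⌈n/k⌉, k+1) + (k-r)·C(⌊n/k⌋, k+1)` monotone
subsequences of length `k+1`, where `r ≡ n (mod k)`, `0 ≤ r < k`. -/
theorem stmt_1 (k n : ℕ) (hk : 0 < k) (hn : 0 < n) :
    Set.ncard {s : Finset (Fin n) | s.card = k + 1 ∧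
        (StrictMonoOn (fun p : Fin n => tauVal k n p) (↑s : Set (Fin n)) ∨
          StrictAntiOn (fun p : Fin n => tauVal k n p) (↑s : Set (Fin n)))} =
      n % k * Nat.choose ((n + k - 1) / k) (k + 1) +
        (k - n % k) * Nat.choose (n / k) (k + 1) :=
  stmt_1_general k n hk
end

section
/- Let a ≥ b > 0 be integers and let F be a family of a-element sets. Then the shadow ∂_b F = {B : |B| = b and B ⊆ A for some A ∈ F} satisfies |∂_b F| ≥ min{|F|/2, 2^b}. -/
/-!
Let `k` be maximal with `C(k, a) ≤ |F|`. The Lovász form of Kruskal–Katona bounds the `b`-shadow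
from below by `C(k, b)`. If `k ≥ 2b` this is at least `C(2b, b) ≥ 2^b`. Otherwise `k < a + b`, and
unimodality of binomial coefficients gives `|F| < C(k + 1, a) = C(k, a - 1) + C(k, a) ≤ 2 C(k, b)`.

Mathlib proves Kruskal–Katona on `Fin n`; a family on an arbitrary type is carried there through
the subtype of its union, and the shadow commutes with such embeddings.
-/

namespace Nat

theorem two_pow_le_centralBinom (n : ℕ) : 2 ^ n ≤ centralBinom n := by
  induction n with
  | zero => simp
  | succ n ih =>
    have h := succ_mul_centralBinom_succ n
    have : 2 * centralBinom n ≤ centralBinom (n + 1) := by nlinarith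
    rw [pow_succ]
    omega

theorem choose_le_choose_of_le_half {n i j : ℕ} (hij : i ≤ j) (hj : j ≤ n / 2) :
    n.choose i ≤ n.choose j := by
  induction j, hij using le_induction with
  | base => rfl
  | succ j _ ih => exact (ih (by omega)).trans (choose_le_succ_of_lt_half_left (by omega))

theorem choose_le_choose_of_le_of_le_add {n r s : ℕ} (hsr : s ≤ r) (hn : n ≤ r + s) :
    n.choose r ≤ n.choose s := by
  obtain hnr | hrn := lt_or_ge n r
  · simp [choose_eq_zero_of_lt hnr]
  rw [← choose_symm hrn]
  obtain hs | hs := le_or_gt s (n / 2)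
  · exact choose_le_choose_of_le_half (by omega) hs
  · rw [← choose_symm (hsr.trans hrn)]
    exact choose_le_choose_of_le_half (by omega) (by omega)

theorem choose_succ_le_two_mul_choose {k a b : ℕ} (hba : b < a) (hk : k < a + b) :
    (k + 1).choose a ≤ 2 * k.choose b := by
  obtain ⟨c, rfl⟩ : ∃ c, a = c + 1 := ⟨a - 1, by omega⟩
  rw [choose_succ_succ']
  have := choose_le_choose_of_le_of_le_add (n := k) (by omega : b ≤ c) (by omega)
  have := choose_le_choose_of_le_of_le_add (n := k) (by omega : b ≤ c + 1) (by omega)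
  omega

theorem lt_choose_add {a : ℕ} (ha : 0 < a) (N : ℕ) : N < (N + a).choose a := by
  rw [← choose_symm_add]
  calc N < (N + 1).choose N := by simp
    _ ≤ (N + a).choose N := choose_le_choose N (by omega)

theorem exists_choose_le_lt_choose_succ {a N : ℕ} (ha : 0 < a) (hN : 0 < N) :
    ∃ k, a ≤ k ∧ k.choose a ≤ N ∧ N < (k + 1).choose a := by
  have hex : ∃ m : ℕ, N < m.choose a := ⟨_, lt_choose_add ha N⟩
  obtain ⟨k, hk⟩ : ∃ k, Nat.find hex = k + 1 :=
    exists_eq_succ_of_ne_zero fun h => by simpa [h, choose_eq_zero_of_lt ha] using Nat.find_spec hex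
  have hlt : N < (k + 1).choose a := hk ▸ Nat.find_spec hex
  have hle : k.choose a ≤ N := not_lt.1 (Nat.find_min hex (by omega))
  refine ⟨k, ?_, hle, hlt⟩
  by_contra! hka
  have : (k + 1).choose a ≤ 1 := by
    obtain hka | rfl := (succ_le_of_lt hka).lt_or_eq
    · simp [choose_eq_zero_of_lt hka]
    · simp
  omega

end Nat

open Finset
open scoped FinsetFamily

namespace Finset

variable {α β : Type*} [DecidableEq α] [DecidableEq β] {𝒜 : Finset (Finset α)} {r b k : ℕ}

theorem biUnion_powersetCard_eq_shadow_iterate (h𝒜 : (𝒜 : Set (Finset α)).Sized r)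
    (hbr : b ≤ r) : 𝒜.biUnion (powersetCard b) = ∂^[r - b] 𝒜 := by
  ext t
  simp only [mem_biUnion, mem_powersetCard, mem_shadow_iterate_iff_exists_mem_card_add]
  refine exists_congr fun s => and_congr_right fun hs => and_congr_right fun _ => ?_
  have := h𝒜 hs
  omega

theorem map_biUnion_powersetCard (f : α ↪ β) (𝒜 : Finset (Finset α)) (b : ℕ) :
    (𝒜.map (mapEmbedding f).toEmbedding).biUnion (powersetCard b) =
      (𝒜.biUnion (powersetCard b)).map (mapEmbedding f).toEmbedding := by
  simp only [map_eq_image, image_biUnion, biUnion_image]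
  refine biUnion_congr rfl fun A _ => ?_
  rw [← map_eq_image]
  exact powersetCard_map f b A

theorem card_biUnion_powersetCard_map (f : α ↪ β) (𝒜 : Finset (Finset α)) (b : ℕ) :
    #((𝒜.map (mapEmbedding f).toEmbedding).biUnion (powersetCard b)) =
      #(𝒜.biUnion (powersetCard b)) := by
  rw [map_biUnion_powersetCard, card_map]

omit [DecidableEq α] [DecidableEq β] in
@[simp]
theorem sized_map_mapEmbedding_iff (f : α ↪ β) :
    ((𝒜.map (mapEmbedding f).toEmbedding : Finset (Finset β)) : Set (Finset β)).Sized r ↔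
      (𝒜 : Set (Finset α)).Sized r := by
  simp [Set.Sized]

theorem exists_map_subtype_eq (𝒜 : Finset (Finset α)) :
    ∃ 𝒢 : Finset (Finset {x // x ∈ 𝒜.sup id}),
      𝒢.map (mapEmbedding (Function.Embedding.subtype _)).toEmbedding = 𝒜 := by
  have h𝒜 : 𝒜 ⊆ (univ : Finset (Finset {x // x ∈ 𝒜.sup id})).map
      (mapEmbedding (Function.Embedding.subtype _)).toEmbedding := fun A hA =>
    mem_map.2 ⟨_, mem_univ _, subtype_map_of_mem fun _ hx => (le_sup (f := id) hA : A ⊆ _) hx⟩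
  obtain ⟨𝒢, -, h⟩ := subset_map_iff.1 h𝒜
  exact ⟨𝒢, h.symm⟩

theorem choose_le_card_biUnion_powersetCard_of_fintype [Fintype α] (hbr : b ≤ r) (hrk : r ≤ k)
    (h𝒜 : (𝒜 : Set (Finset α)).Sized r) (hk : k.choose r ≤ #𝒜) :
    k.choose b ≤ #(𝒜.biUnion (powersetCard b)) := by
  let f : α ↪ Fin (Fintype.card α + k) :=
    (Fintype.equivFin α).toEmbedding.trans (Fin.castLEEmb (Nat.le_add_right _ _))
  have hℬ := (sized_map_mapEmbedding_iff f).2 h𝒜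
  have := kruskal_katona_lovasz_form (Nat.sub_le r b) hrk (Nat.le_add_left _ _) hℬ
    (by rwa [card_map])
  rwa [Nat.sub_sub_self hbr, ← biUnion_powersetCard_eq_shadow_iterate hℬ hbr,
    card_biUnion_powersetCard_map] at this

theorem choose_le_card_biUnion_powersetCard (hbr : b ≤ r) (hrk : r ≤ k)
    (h𝒜 : (𝒜 : Set (Finset α)).Sized r) (hk : k.choose r ≤ #𝒜) :
    k.choose b ≤ #(𝒜.biUnion (powersetCard b)) := by
  obtain ⟨𝒢, h𝒢⟩ := exists_map_subtype_eq 𝒜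
  rw [← h𝒢, sized_map_mapEmbedding_iff] at h𝒜
  rw [← h𝒢, card_map] at hk
  rw [← h𝒢, card_biUnion_powersetCard_map]
  exact choose_le_card_biUnion_powersetCard_of_fintype hbr hrk h𝒜 hk

theorem two_pow_le_or_card_le_two_mul_card_biUnion_powersetCard {a : ℕ} (hba : b ≤ a)
    (h𝒜 : (𝒜 : Set (Finset α)).Sized a) :
    2 ^ b ≤ #(𝒜.biUnion (powersetCard b)) ∨ #𝒜 ≤ 2 * #(𝒜.biUnion (powersetCard b)) := by
  obtain rfl | hba := hba.eq_or_lt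
  · have h𝒜S : 𝒜 ⊆ 𝒜.biUnion (powersetCard b) := fun A hA =>
      mem_biUnion.2 ⟨A, hA, mem_powersetCard.2 ⟨Subset.rfl, h𝒜 hA⟩⟩
    have := card_le_card h𝒜S
    omega
  obtain rfl | h𝒜ne := 𝒜.eq_empty_or_nonempty
  · simp
  obtain ⟨k, hak, hk, hk1⟩ :=
    Nat.exists_choose_le_lt_choose_succ (by omega : 0 < a) h𝒜ne.card_pos
  have hS := choose_le_card_biUnion_powersetCard hba.le hak h𝒜 hk
  obtain h2b | h2b := le_or_gt (2 * b) k
  · left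
    calc 2 ^ b ≤ Nat.centralBinom b := Nat.two_pow_le_centralBinom b
      _ = (2 * b).choose b := Nat.centralBinom_eq_two_mul_choose b
      _ ≤ k.choose b := Nat.choose_le_choose b h2b
      _ ≤ _ := hS
  · right
    have := Nat.choose_succ_le_two_mul_choose (k := k) hba (by omega)
    omega

end Finset

theorem stmt_3_general {α : Type*} [DecidableEq α] (a b : ℕ) (hba : b ≤ a)
    (F : Finset (Finset α)) (hF : ∀ A ∈ F, A.card = a) :
    min ((F.card : ℝ) / 2) (2 ^ b) ≤
      (((F.biUnion fun A => A.powersetCard b).card : ℕ) : ℝ) := by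
  obtain h | h := two_pow_le_or_card_le_two_mul_card_biUnion_powersetCard hba fun A hA => hF A hA
  · exact min_le_of_right_le (by exact_mod_cast h)
  · refine min_le_of_left_le ?_
    rw [div_le_iff₀ two_pos]
    exact_mod_cast (by omega : #F ≤ #(F.biUnion (powersetCard b)) * 2)

/-- Kruskal–Katona corollary: if `F` is a family of `a`-element sets and `a ≥ b > 0`,
then the `b`-shadow of `F` has size at least `min (|F|/2) (2^b)`. -/
theorem stmt_3 {α : Type*} [DecidableEq α] (a b : ℕ) (hb : 0 < b) (hba : b ≤ a)
    (F : Finset (Finset α)) (hF : ∀ A ∈ F, A.card = a) :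
    min ((F.card : ℝ) / 2) (2 ^ b) ≤
      (((F.biUnion fun A => A.powersetCard b).card : ℕ) : ℝ) :=
  stmt_3_general a b hba F hF
end

section
/- Let M be a positive integer, X and Y arbitrary sets, and f_1, ..., f_M : X → Y pairwise distinct functions. Then there exist subsets X_1, ..., X_M of X, each of size at most log_2 M, such that for all i ≠ j, the restrictions of f_i and f_j to X_i ∪ X_j are different. -/
/-!
Induct on the number of functions. If at least two remain, pick a point `x` where two of
them differ and split the family by the value at `x`; every class is strictly smaller, so
each class gets witness sets by induction. Adding `x` to the witness set of every function
outside a largest class separates functions in different classes, and it costs one point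
only for functions in a class of at most half the family, so `2 ^ #(witness set)` never
exceeds the size of the family.
-/

open Finset

namespace Function

variable {X Y : Type*} [DecidableEq X]

def Distinguishes (W : (X → Y) → Finset X) (S : Finset (X → Y)) : Prop :=
  ∀ g ∈ S, ∀ h ∈ S, g ≠ h → ∃ x ∈ W g ∪ W h, g x ≠ h x

theorem distinguishes_of_card_le_one (W : (X → Y) → Finset X) {S : Finset (X → Y)}
    (hS : #S ≤ 1) : Distinguishes W S :=
  fun g hg h hh hne => absurd (card_le_one.mp hS g hg h hh) hne

variable [DecidableEq Y]

/-- `W y` stands for witness sets of the class `{g ∈ S | g x = y}`, and `y₀` for the value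
of a largest class. -/
def refineWitness (x : X) (y₀ : Y) (W : Y → (X → Y) → Finset X) (g : X → Y) : Finset X :=
  if g x = y₀ then W (g x) g else insert x (W (g x) g)

theorem subset_refineWitness (x : X) (y₀ : Y) (W : Y → (X → Y) → Finset X) (g : X → Y) :
    W (g x) g ⊆ refineWitness x y₀ W g := by
  unfold refineWitness
  split_ifs
  exacts [subset_rfl, subset_insert _ _]

theorem mem_refineWitness {x : X} {y₀ : Y} {g : X → Y} (W : Y → (X → Y) → Finset X)
    (hg : g x ≠ y₀) : x ∈ refineWitness x y₀ W g := by
  simp [refineWitness, hg]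

theorem distinguishes_refineWitness {S : Finset (X → Y)} (x : X) (y₀ : Y)
    {W : Y → (X → Y) → Finset X} (hW : ∀ y, Distinguishes (W y) {g ∈ S | g x = y}) :
    Distinguishes (refineWitness x y₀ W) S := by
  intro g hg h hh hne
  by_cases hgh : g x = h x
  · obtain ⟨z, hz, hgz⟩ := hW (g x) g (by simp [hg]) h (by simp [hh, hgh]) hne
    have hWh : W (g x) h ⊆ refineWitness x y₀ W h := hgh ▸ subset_refineWitness x y₀ W h
    exact ⟨z, union_subset_union (subset_refineWitness x y₀ W g) hWh hz, hgz⟩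
  · refine ⟨x, ?_, hgh⟩
    by_cases hg₀ : g x = y₀
    · exact mem_union_right _ (mem_refineWitness W fun hh₀ => hgh (hg₀.trans hh₀.symm))
    · exact mem_union_left _ (mem_refineWitness W hg₀)

theorem two_pow_card_refineWitness_le {S : Finset (X → Y)} (x : X) {y₀ : Y}
    {W : Y → (X → Y) → Finset X}
    (hW : ∀ y, ∀ g ∈ S, g x = y → 2 ^ #(W y g) ≤ #{g ∈ S | g x = y})
    (hy₀ : ∀ g ∈ S, #{f ∈ S | f x = g x} ≤ #{f ∈ S | f x = y₀})
    {g : X → Y} (hg : g ∈ S) : 2 ^ #(refineWitness x y₀ W g) ≤ #S := by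
  have hWg := hW (g x) g hg rfl
  by_cases hg₀ : g x = y₀
  · simpa [refineWitness, hg₀] using hWg.trans (card_le_card (filter_subset _ S))
  have hdouble : 2 * #{f ∈ S | f x = g x} ≤ #S := by
    have hsplit := card_filter_add_card_filter_not (s := S) (fun f => f x = g x)
    have hy₀_sub : {f ∈ S | f x = y₀} ⊆ {f ∈ S | ¬ f x = g x} := by
      intro f hf
      simp only [mem_filter] at hf ⊢
      exact ⟨hf.1, fun hfg => hg₀ (hfg.symm.trans hf.2)⟩
    linarith [card_le_card hy₀_sub, hy₀ g hg]
  calc 2 ^ #(refineWitness x y₀ W g) ≤ 2 ^ (#(W (g x) g) + 1) := by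
        simp only [refineWitness, hg₀, if_false]
        exact Nat.pow_le_pow_right two_pos (card_insert_le _ _)
    _ = 2 * 2 ^ #(W (g x) g) := by ring
    _ ≤ #S := by linarith

theorem exists_distinguishes_two_pow_card_le (S : Finset (X → Y)) :
    ∃ W : (X → Y) → Finset X, Distinguishes W S ∧ ∀ g ∈ S, 2 ^ #(W g) ≤ #S := by
  induction S using Finset.strongInduction with
  | H S ih =>
  by_cases hS : #S ≤ 1
  · exact ⟨fun _ => ∅, distinguishes_of_card_le_one _ hS,
      fun g hg => by simpa using card_pos.mpr ⟨g, hg⟩⟩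
  obtain ⟨g₁, hg₁, g₂, hg₂, hne⟩ := one_lt_card.mp (not_le.mp hS)
  obtain ⟨x, hx⟩ := Function.ne_iff.mp hne
  have hclass_ssubset (y : Y) : {g ∈ S | g x = y} ⊂ S := by
    refine filter_ssubset.mpr ?_
    by_cases h₁ : g₁ x = y
    exacts [⟨g₂, hg₂, fun h₂ => hx (h₁.trans h₂.symm)⟩, ⟨g₁, hg₁, h₁⟩]
  choose W hWdist hWcard using fun y => ih _ (hclass_ssubset y)
  obtain ⟨g₀, -, hg₀⟩ := S.exists_max_image (fun g => #{f ∈ S | f x = g x}) ⟨g₁, hg₁⟩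
  exact ⟨refineWitness x (g₀ x) W, distinguishes_refineWitness x _ hWdist,
    fun g hg => two_pow_card_refineWitness_le x
      (fun y f hf hfy => hWcard y f (mem_filter.mpr ⟨hf, hfy⟩)) hg₀ hg⟩

end Function

theorem stmt_4_general {X Y : Type*} (M : ℕ) (f : Fin M → X → Y)
    (hf : ∀ i j : Fin M, i ≠ j → f i ≠ f j) :
    ∃ Xs : Fin M → Set X,
      (∀ i, (Xs i).Finite ∧ ((Xs i).ncard : ℝ) ≤ Real.logb 2 M) ∧
      ∀ i j : Fin M, i ≠ j → ∃ x ∈ Xs i ∪ Xs j, f i x ≠ f j x := by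
  classical
  have hcard : #(univ.image f) = M := by
    rw [card_image_of_injective _ fun i j h => by_contra fun hij => hf i j hij h, card_fin]
  obtain ⟨W, hdist, hsize⟩ := Function.exists_distinguishes_two_pow_card_le (univ.image f)
  refine ⟨fun i => W (f i), fun i => ⟨(W (f i)).finite_toSet, ?_⟩, fun i j hij => ?_⟩
  · have hpow := hsize (f i) (mem_image_of_mem f (mem_univ i))
    rw [hcard] at hpow
    rw [Set.ncard_coe_finset]
    exact (Nat.cast_le.mpr (Nat.le_log_of_pow_le one_lt_two hpow)).trans
      (Real.natLog_le_logb M 2)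
  · simpa only [← coe_union, mem_coe] using
      hdist (f i) (mem_image_of_mem f (mem_univ i)) (f j) (mem_image_of_mem f (mem_univ j))
        (hf i j hij)

/-- Pairwise distinct functions `f_1, …, f_M : X → Y` can be distinguished on witness
sets `X_1, …, X_M ⊆ X` of size at most `log₂ M`: for all `i ≠ j` the restrictions of
`f i` and `f j` to `X i ∪ X j` differ. -/
theorem stmt_4 {X Y : Type*} (M : ℕ) (hM : 0 < M) (f : Fin M → X → Y)
    (hf : ∀ i j : Fin M, i ≠ j → f i ≠ f j) :
    ∃ Xs : Fin M → Set X,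
      (∀ i, (Xs i).Finite ∧ ((Xs i).ncard : ℝ) ≤ Real.logb 2 M) ∧
      ∀ i j : Fin M, i ≠ j → ∃ x ∈ Xs i ∪ Xs j, f i x ≠ f j x :=
  stmt_4_general M f hf
end

section
/- Let k, ℓ, M be positive integers with log_2 M + 1 ≤ k/4, and let P be a finite poset of height k+ℓ. If P contains at least M chains of length k+ℓ (i.e., maximum chains), then P contains at least exp(−2(ℓ−1)(log_2 M + 1)/k) · M · C(k+ℓ, k+1) chains of length k+1. -/
/-!
Heights give all maximum chains a common coordinate system: a chain with `n = k + ℓ` elements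
meets each level `elemHeight = i`, `1 ≤ i ≤ n`, in exactly one element. Viewing `M` maximum chains
as functions of the level, one can attach to every chain a set of at most `s = ⌊log₂ M⌋` levels so
that any two chains differ on a level attached to one of them (split along a coordinate and charge
it to the smaller half). No `(k + 1)`-subset then contains the attached elements of two different
chains while lying in both, which yields `M · C(n - s, k + 1 - s)` chains with `k + 1` elements.
Finally `C(n, k + 1) / C(n - s, k + 1 - s)` is a product of `s` factors
`1 + (ℓ - 1) / (k + 2 - s + j) ≤ exp ((ℓ - 1) / (k + 2 - s))`, and `s ≤ k / 4` makes the exponent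
at most `2 (ℓ - 1)(log₂ M + 1) / k`.
-/

open Finset

section Witness
variable {α β : Type*} [DecidableEq α]

def IsSeparatingWitness (V : Finset (α → β)) (W : (α → β) → Finset α) : Prop :=
  (∀ f ∈ V, 2 ^ #(W f) ≤ #V) ∧ ∀ f ∈ V, ∀ g ∈ V, f ≠ g → ∃ i ∈ W f ∪ W g, f i ≠ g i

lemma IsSeparatingWitness.of_subsingleton {V : Finset (α → β)} (hV : #V ≤ 1) :
    IsSeparatingWitness V fun _ => ∅ :=
  ⟨fun f hf => by simpa using card_pos.2 ⟨f, hf⟩,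
    fun f hf g hg hfg => absurd (card_le_one.1 hV f hf g hg) hfg⟩

lemma IsSeparatingWitness.split {V V₁ V₂ : Finset (α → β)} {W₁ W₂ : (α → β) → Finset α}
    (hW₁ : IsSeparatingWitness V₁ W₁) (hW₂ : IsSeparatingWitness V₂ W₂)
    (hV₂ : V₂ ⊆ V) (hV : ∀ f ∈ V, f ∈ V₁ ∨ f ∈ V₂) (hcard : 2 * #V₁ ≤ #V)
    (i₀ : α) (hi₀ : ∀ f ∈ V₁, ∀ g ∈ V₂, f i₀ ≠ g i₀) :
    ∃ W, IsSeparatingWitness V W := by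
  classical
  refine ⟨fun f => if f ∈ V₁ then insert i₀ (W₁ f) else W₂ f, fun f hf => ?_,
    fun f hf g hg hfg => ?_⟩
  · dsimp only
    split_ifs with hf₁
    · calc 2 ^ #(insert i₀ (W₁ f)) ≤ 2 ^ (#(W₁ f) + 1) :=
            Nat.pow_le_pow_right two_pos (card_insert_le _ _)
        _ ≤ 2 * #V₁ := by rw [pow_succ']; exact Nat.mul_le_mul_left 2 (hW₁.1 f hf₁)
        _ ≤ #V := hcard
    · exact (hW₂.1 f ((hV f hf).resolve_left hf₁)).trans (card_le_card hV₂)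
  · by_cases hf₁ : f ∈ V₁ <;> by_cases hg₁ : g ∈ V₁ <;> simp only [hf₁, hg₁, if_true, if_false]
    · obtain ⟨i, hi, hne⟩ := hW₁.2 f hf₁ g hg₁ hfg
      refine ⟨i, ?_, hne⟩
      rcases mem_union.1 hi with hi | hi <;> simp [hi]
    · exact ⟨i₀, by simp, hi₀ f hf₁ g ((hV g hg).resolve_left hg₁)⟩
    · exact ⟨i₀, by simp, (hi₀ g hg₁ f ((hV f hf).resolve_left hf₁)).symm⟩
    · exact hW₂.2 f ((hV f hf).resolve_left hf₁) g ((hV g hg).resolve_left hg₁) hfg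

theorem exists_isSeparatingWitness (V : Finset (α → β)) :
    ∃ W, IsSeparatingWitness V W := by
  classical
  induction V using Finset.strongInduction with
  | H V ih =>
  by_cases hV : #V ≤ 1
  · exact ⟨_, .of_subsingleton hV⟩
  obtain ⟨f₀, hf₀, g₀, hg₀, hne⟩ := one_lt_card.1 (not_le.1 hV)
  obtain ⟨i₀, hi₀⟩ := Function.ne_iff.1 hne
  set V₁ := V.filter fun f => f i₀ = f₀ i₀
  set V₂ := V.filter fun f => f i₀ ≠ f₀ i₀
  have hV₁ : V₁ ⊂ V := filter_ssubset.2 ⟨g₀, hg₀, Ne.symm hi₀⟩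
  have hV₂ : V₂ ⊂ V := filter_ssubset.2 ⟨f₀, hf₀, not_not.2 rfl⟩
  obtain ⟨W₁, hW₁⟩ := ih V₁ hV₁
  obtain ⟨W₂, hW₂⟩ := ih V₂ hV₂
  have hcover : ∀ f ∈ V, f ∈ V₁ ∨ f ∈ V₂ := fun f hf => by
    simp only [V₁, V₂, mem_filter]; tauto
  have hsep : ∀ f ∈ V₁, ∀ g ∈ V₂, f i₀ ≠ g i₀ := fun f hf g hg => by
    simp only [V₁, V₂, mem_filter] at hf hg; rw [hf.2]; exact Ne.symm hg.2
  have hsum : #V₁ + #V₂ = #V := card_filter_add_card_filter_not _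
  rcases le_total #V₁ #V₂ with h | h
  · exact hW₁.split hW₂ hV₂.subset hcover (by omega) i₀ hsep
  · exact hW₂.split hW₁ hV₁.subset (fun f hf => (hcover f hf).symm) (by omega) i₀
      fun f hf g hg => (hsep g hg f hf).symm

end Witness

lemma choose_le_card_between {γ : Type*} [DecidableEq γ] {A c : Finset γ} (hAc : A ⊆ c)
    {s r : ℕ} (hAs : #A ≤ s) (hsr : s ≤ r) (hsc : s ≤ #c) :
    (#c - s).choose (r - s) ≤ #{S ∈ c.powerset | A ⊆ S ∧ #S = r} := by
  obtain ⟨B, hAB, hBc, hB⟩ := exists_subsuperset_card_eq hAc hAs hsc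
  have hdisj {D : Finset γ} (hD : D ⊆ c \ B) : Disjoint B D :=
    disjoint_of_subset_right hD disjoint_sdiff
  rw [← hB, ← card_sdiff_of_subset hBc, ← card_powersetCard]
  refine card_le_card_of_injOn (B ∪ ·) (fun D hD => ?_) (fun D hD D' hD' h => ?_)
  · obtain ⟨hDc, hDcard⟩ := mem_powersetCard.1 hD
    simp only [coe_filter, mem_powerset, Set.mem_ofPred_eq]
    refine ⟨union_subset hBc (hDc.trans sdiff_subset), hAB.trans subset_union_left, ?_⟩
    rw [card_union_of_disjoint (hdisj hDc), hDcard]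
    omega
  · rw [← union_sdiff_cancel_left (hdisj (mem_powersetCard.1 hD).1),
      ← union_sdiff_cancel_left (hdisj (mem_powersetCard.1 hD').1)]
    exact congrArg (· \ B) h

section Height
variable {P : Type*} [PartialOrder P] [Fintype P]

open Classical in
noncomputable def elemHeight (x : P) : ℕ :=
  ((univ : Finset (Finset P)).filter
    fun d : Finset P => IsChain (· ≤ ·) (d : Set P) ∧ ∀ y ∈ d, y ≤ x).sup card

lemma card_le_elemHeight {x : P} {d : Finset P} (hd : IsChain (· ≤ ·) (d : Set P))
    (hdx : ∀ y ∈ d, y ≤ x) : #d ≤ elemHeight x := by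
  classical
  exact le_sup (f := card) (mem_filter.2 ⟨mem_univ d, hd, hdx⟩)

lemma exists_chain_card_eq_elemHeight (x : P) :
    ∃ d : Finset P, IsChain (· ≤ ·) (d : Set P) ∧ (∀ y ∈ d, y ≤ x) ∧ #d = elemHeight x := by
  classical
  obtain ⟨d, hd, hcard⟩ := exists_mem_eq_sup (univ.filter fun d : Finset P =>
    IsChain (· ≤ ·) (d : Set P) ∧ ∀ y ∈ d, y ≤ x) ⟨∅, by simp⟩ card
  simp only [mem_filter, mem_univ, true_and] at hd
  exact ⟨d, hd.1, hd.2, by rw [elemHeight, hcard]⟩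

lemma one_le_elemHeight (x : P) : 1 ≤ elemHeight x :=
  card_le_elemHeight (d := {x}) (by simp) (by simp)

lemma elemHeight_le {n : ℕ} (hP : ∀ c : Finset P, IsChain (· ≤ ·) (c : Set P) → #c ≤ n)
    (x : P) : elemHeight x ≤ n := by
  obtain ⟨d, hd, -, hcard⟩ := exists_chain_card_eq_elemHeight x
  exact hcard ▸ hP d hd

lemma elemHeight_strictMono : StrictMono (elemHeight : P → ℕ) := by
  classical
  intro x y hxy
  obtain ⟨d, hd, hdx, hcard⟩ := exists_chain_card_eq_elemHeight x
  have hyd : y ∉ d := fun hy => (hdx y hy).not_gt hxy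
  calc elemHeight x < #(insert y d) := by rw [card_insert_of_notMem hyd, hcard]; omega
    _ ≤ elemHeight y := by
      refine card_le_elemHeight ?_ ?_
      · rw [coe_insert]
        exact hd.insert fun b hb _ => Or.inr ((hdx b hb).trans hxy.le)
      · simpa using fun b hb => (hdx b hb).trans hxy.le

lemma IsChain.injOn_elemHeight {c : Set P} (hc : IsChain (· ≤ ·) c) :
    Set.InjOn elemHeight c := by
  intro x hx y hy hxy
  by_contra hne
  rcases hc hx hy hne with h | h
  · exact (elemHeight_strictMono (h.lt_of_ne hne)).ne hxy
  · exact (elemHeight_strictMono (h.lt_of_ne (Ne.symm hne))).ne' hxy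

/-- For a maximum chain `c`, `level c i` is `{x}` for the element `x` of `c` of height `i`, or `∅`
if there is none. -/
noncomputable def level (c : Finset P) (i : ℕ) : Finset P :=
  c.filter fun x => elemHeight x = i

lemma level_injective : Function.Injective (level : Finset P → ℕ → Finset P) := by
  intro c c' h
  ext x
  simpa [level] using Finset.ext_iff.1 (congrFun h (elemHeight x)) x

variable {n : ℕ} (hP : ∀ c : Finset P, IsChain (· ≤ ·) (c : Set P) → #c ≤ n)
include hP

lemma image_elemHeight_eq_Icc {c : Finset P} (hc : IsChain (· ≤ ·) (c : Set P)) (hcn : #c = n) :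
    c.image elemHeight = Icc 1 n := by
  refine eq_of_subset_of_card_le (fun i hi => ?_) ?_
  · obtain ⟨x, -, rfl⟩ := mem_image.1 hi
    exact mem_Icc.2 ⟨one_le_elemHeight x, elemHeight_le hP x⟩
  · rw [card_image_of_injOn hc.injOn_elemHeight, Nat.card_Icc, hcn]; omega

lemma card_level {c : Finset P} (hc : IsChain (· ≤ ·) (c : Set P)) (hcn : #c = n) (i : ℕ) :
    #(level c i) = #((Icc 1 n).filter (· = i)) := by
  rw [level, ← image_elemHeight_eq_Icc hP hc hcn, filter_image, card_image_of_injOn]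
  exact hc.injOn_elemHeight.mono (filter_subset _ c)

lemma level_eq_of_filter_subset {c c' : Finset P} (hc : IsChain (· ≤ ·) (c : Set P))
    (hcn : #c = n) (hc' : IsChain (· ≤ ·) (c' : Set P)) (hc'n : #c' = n) {W : Finset ℕ}
    (hW : c.filter (fun x => elemHeight x ∈ W) ⊆ c') {i : ℕ} (hi : i ∈ W) :
    level c i = level c' i := by
  refine eq_of_subset_of_card_le (fun x hx => ?_) ?_
  · simp only [level, mem_filter] at hx ⊢
    exact ⟨hW (mem_filter.2 ⟨hx.1, hx.2 ▸ hi⟩), hx.2⟩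
  · rw [card_level hP hc' hc'n, card_level hP hc hcn]

theorem card_mul_choose_le_ncard_chains {F : Set (Finset P)}
    (hF : F ⊆ {c : Finset P | c.card = n ∧ IsChain (· ≤ ·) (↑c : Set P)}) {r : ℕ}
    (hsr : Nat.log 2 F.ncard ≤ r) (hrn : r ≤ n) :
    F.ncard * (n - Nat.log 2 F.ncard).choose (r - Nat.log 2 F.ncard) ≤
      Set.ncard {S : Finset P | S.card = r ∧ IsChain (· ≤ ·) (↑S : Set P)} := by
  classical
  obtain ⟨F, rfl⟩ := F.toFinite.exists_finset_coe
  rw [Set.ncard_coe_finset] at hsr ⊢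
  set s := Nat.log 2 #F
  have hFc (c) (hc : c ∈ F) : #c = n ∧ IsChain (· ≤ ·) (c : Set P) := hF hc
  obtain ⟨W, hWcard, hWsep⟩ := exists_isSeparatingWitness (F.image level)
  set A : Finset P → Finset P := fun c => c.filter fun x => elemHeight x ∈ W (level c)
  set N : Finset P → Finset (Finset P) := fun c => {S ∈ c.powerset | A c ⊆ S ∧ #S = r}
  have hAs (c) (hc : c ∈ F) : #(A c) ≤ s := by
    have hAW : #(A c) ≤ #(W (level c)) :=
      card_le_card_of_injOn elemHeight (fun x hx => (mem_filter.1 hx).2)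
        ((hFc c hc).2.injOn_elemHeight.mono (filter_subset _ c))
    have hW : 2 ^ #(W (level c)) ≤ #F := by
      simpa [card_image_of_injective _ level_injective] using
        hWcard (level c) (mem_image_of_mem level hc)
    exact hAW.trans (Nat.le_log_of_pow_le one_lt_two hW)
  have hN (c) (hc : c ∈ F) : (n - s).choose (r - s) ≤ #(N c) :=
    (hFc c hc).1 ▸ choose_le_card_between (filter_subset _ c) (hAs c hc) hsr
      ((hsr.trans hrn).trans (hFc c hc).1.ge)
  have hdisj : (F : Set (Finset P)).PairwiseDisjoint N := by
    intro c hc c' hc' hne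
    refine disjoint_left.2 fun S hS hS' => ?_
    simp only [N, mem_filter, mem_powerset] at hS hS'
    obtain ⟨i, hi, hlevel⟩ := hWsep (level c) (mem_image_of_mem level hc) (level c')
      (mem_image_of_mem level hc') (level_injective.ne hne)
    rcases mem_union.1 hi with hi | hi
    · exact hlevel (level_eq_of_filter_subset hP (hFc c hc).2 (hFc c hc).1 (hFc c' hc').2
        (hFc c' hc').1 (hS.2.1.trans hS'.1) hi)
    · exact hlevel (level_eq_of_filter_subset hP (hFc c' hc').2 (hFc c' hc').1 (hFc c hc).2
        (hFc c hc).1 (hS'.2.1.trans hS.1) hi).symm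
  have hchains : ↑(F.biUnion N) ⊆ {S : Finset P | S.card = r ∧ IsChain (· ≤ ·) (↑S : Set P)} := by
    intro S hS
    obtain ⟨c, hc, hSc⟩ := mem_biUnion.1 hS
    simp only [N, mem_filter, mem_powerset] at hSc
    exact ⟨hSc.2.2, (hFc c hc).2.mono (coe_subset.2 hSc.1)⟩
  calc #F * (n - s).choose (r - s) ≤ ∑ c ∈ F, #(N c) := by
        rw [← smul_eq_mul]; exact card_nsmul_le_sum F _ _ hN
    _ = #(F.biUnion N) := (card_biUnion hdisj).symm
    _ ≤ _ := by rw [← Set.ncard_coe_finset]; exact Set.ncard_le_ncard hchains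

end Height

lemma choose_succ_le_exp_mul_choose (d r : ℕ) :
    ((d + r + 1).choose (r + 1) : ℝ) ≤ Real.exp (d / (r + 1)) * (d + r).choose r := by
  have hr : (0 : ℝ) < r + 1 := by positivity
  have hstep : ((d + r + 1).choose (r + 1) : ℝ) = (1 + d / (r + 1)) * (d + r).choose r := by
    have h : ((d + r + 1).choose (r + 1) : ℝ) * (r + 1) = (d + r + 1) * (d + r).choose r := by
      exact_mod_cast (Nat.add_one_mul_choose_eq (d + r) r).symm
    field_simp
    linarith
  rw [hstep]
  gcongr
  linarith [Real.add_one_le_exp ((d : ℝ) / (r + 1))]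

lemma choose_add_le_exp_mul_choose (d r j : ℕ) :
    ((d + r + j).choose (r + j) : ℝ) ≤ Real.exp (j * d / (r + 1)) * (d + r).choose r := by
  induction j with
  | zero => simp
  | succ j ih =>
    calc ((d + r + (j + 1)).choose (r + (j + 1)) : ℝ)
        = ((d + (r + j) + 1).choose ((r + j) + 1) : ℝ) := by
          rw [← add_assoc, ← add_assoc, add_assoc d]
      _ ≤ Real.exp (d / ((r + j : ℕ) + 1)) * (d + (r + j)).choose (r + j) :=
          choose_succ_le_exp_mul_choose d (r + j)
      _ ≤ Real.exp (d / (r + 1)) * (Real.exp (j * d / (r + 1)) * (d + r).choose r) := by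
          rw [← add_assoc]
          gcongr
          linarith
      _ = Real.exp ((j + 1 : ℕ) * d / (r + 1)) * (d + r).choose r := by
          rw [← mul_assoc, ← Real.exp_add]; push_cast; ring_nf

lemma choose_le_exp_mul_choose_sub {k ℓ s : ℕ} {L : ℝ} (hℓ : 0 < ℓ) (hsL : s ≤ L)
    (hL : L + 1 ≤ k / 4) :
    ((k + ℓ).choose (k + 1) : ℝ) ≤
      Real.exp (2 * ((ℓ : ℝ) - 1) * (L + 1) / k) * (k + ℓ - s).choose (k + 1 - s) := by
  have hks : (4 * s + 4 : ℝ) ≤ k := by linarith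
  have hsk : 4 * s + 4 ≤ k := by exact_mod_cast hks
  obtain ⟨d, rfl⟩ := Nat.exists_eq_add_one_of_ne_zero hℓ.ne'
  set r := k + 1 - s
  have e1 : k + (d + 1) = d + r + s := by omega
  have e2 : k + 1 = r + s := by omega
  rw [e1, e2, Nat.add_sub_cancel]
  refine (choose_add_le_exp_mul_choose d r s).trans
    (mul_le_mul_of_nonneg_right (Real.exp_le_exp.2 ?_) (Nat.cast_nonneg _))
  have hrk : (r : ℝ) + s = k + 1 := by exact_mod_cast e2.symm
  have hk : (0 : ℝ) < k := by linarith [(Nat.cast_nonneg s : (0 : ℝ) ≤ s)]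
  rw [div_le_div_iff₀ (by positivity) hk]
  push_cast
  nlinarith [mul_nonneg (Nat.cast_nonneg d : (0 : ℝ) ≤ d) (sub_nonneg.2 hsL),
    mul_nonneg (Nat.cast_nonneg d : (0 : ℝ) ≤ d) (Nat.cast_nonneg s : (0 : ℝ) ≤ s)]

theorem stmt_5_general {P : Type*} [Fintype P] [PartialOrder P] (k ℓ M : ℕ)
    (hℓ : 0 < ℓ)
    (hlog : Real.logb 2 M + 1 ≤ (k : ℝ) / 4)
    (hheight : (∃ c : Finset P, c.card = k + ℓ ∧ IsChain (· ≤ ·) (↑c : Set P)) ∧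
      ∀ c : Finset P, IsChain (· ≤ ·) (↑c : Set P) → c.card ≤ k + ℓ)
    (hchains : M ≤ Set.ncard
      {c : Finset P | c.card = k + ℓ ∧ IsChain (· ≤ ·) (↑c : Set P)}) :
    Real.exp (-(2 * ((ℓ : ℝ) - 1) * (Real.logb 2 M + 1)) / k) * M *
        Nat.choose (k + ℓ) (k + 1) ≤
      (Set.ncard {c : Finset P | c.card = k + 1 ∧ IsChain (· ≤ ·) (↑c : Set P)} : ℝ) := by
  have hs : (Nat.log 2 M : ℝ) ≤ Real.logb 2 M := Real.natLog_le_logb M 2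
  have hsk : Nat.log 2 M ≤ k := by
    exact_mod_cast (show (Nat.log 2 M : ℝ) ≤ k by linarith [(Nat.cast_nonneg k : (0 : ℝ) ≤ k)])
  obtain ⟨F, hF, hFM⟩ := Set.exists_subset_card_eq hchains
  have hcount := card_mul_choose_le_ncard_chains hheight.2 hF (r := k + 1)
    (by rw [hFM]; omega) (by omega)
  rw [hFM] at hcount
  have hchoose := choose_le_exp_mul_choose_sub hℓ hs hlog
  calc Real.exp (-(2 * ((ℓ : ℝ) - 1) * (Real.logb 2 M + 1)) / k) * M * Nat.choose (k + ℓ) (k + 1)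
      ≤ Real.exp (-(2 * ((ℓ : ℝ) - 1) * (Real.logb 2 M + 1)) / k) * M *
          (Real.exp (2 * ((ℓ : ℝ) - 1) * (Real.logb 2 M + 1) / k) *
            (k + ℓ - Nat.log 2 M).choose (k + 1 - Nat.log 2 M)) :=
        mul_le_mul_of_nonneg_left hchoose (by positivity)
    _ = M * (k + ℓ - Nat.log 2 M).choose (k + 1 - Nat.log 2 M) := by
      rw [neg_div, Real.exp_neg]; field_simp
    _ ≤ _ := by exact_mod_cast hcount

/-- If a finite poset of height `k+ℓ` contains at least `M` maximum chains
(of `k+ℓ` elements), and `log₂ M + 1 ≤ k/4`, then it contains at least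
`exp(−2(ℓ−1)(log₂ M + 1)/k) · M · C(k+ℓ, k+1)` chains of `k+1` elements. -/
theorem stmt_5 {P : Type*} [Fintype P] [PartialOrder P] (k ℓ M : ℕ)
    (hk : 0 < k) (hℓ : 0 < ℓ) (hM : 0 < M)
    (hlog : Real.logb 2 M + 1 ≤ (k : ℝ) / 4)
    (hheight : (∃ c : Finset P, c.card = k + ℓ ∧ IsChain (· ≤ ·) (↑c : Set P)) ∧
      ∀ c : Finset P, IsChain (· ≤ ·) (↑c : Set P) → c.card ≤ k + ℓ)
    (hchains : M ≤ Set.ncard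
      {c : Finset P | c.card = k + ℓ ∧ IsChain (· ≤ ·) (↑c : Set P)}) :
    Real.exp (-(2 * ((ℓ : ℝ) - 1) * (Real.logb 2 M + 1)) / k) * M *
        Nat.choose (k + ℓ) (k + 1) ≤
      (Set.ncard {c : Finset P | c.card = k + 1 ∧ IsChain (· ≤ ·) (↑c : Set P)} : ℝ) :=
  stmt_5_general k ℓ M hℓ hlog hheight hchains
end

section
/- Let P be a finite poset of height h with canonical antichain decomposition A_1, ..., A_h. For x ∈ A_i let u_i(x) be the number of chains L of length h − i + 1 in P with minimum element x, and let Σ_i = Σ_{x ∈ A_i} u_i(x). Then Σ_i ≥ Σ_{i+1} for every i ∈ [h−1]. -/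
/-!
Every `y ∈ A_{i+1}` lies above some `x ∈ A_i`: removing `y` from a longest chain topped by `y`
leaves a longest chain topped by its maximum. Fixing such an `x = f y`, the map
`(y, L) ↦ (f y, L ∪ {f y})` sends the chains counted by `Σ_{i+1}` injectively to chains counted
by `Σ_i`, since `y` is recovered as the minimum of the chain once `f y` is removed.
-/

open Finset

/-- `x` is in the `i`-th canonical level of the poset: the longest chain whose maximum
element is `x` has exactly `i` elements. -/
def levelAt {P : Type*} [PartialOrder P] (i : ℕ) (x : P) : Prop :=
  (∃ c : Finset P, IsChain (· ≤ ·) (↑c : Set P) ∧ x ∈ c ∧ (∀ y ∈ c, y ≤ x) ∧ c.card = i) ∧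
  ∀ c : Finset P, IsChain (· ≤ ·) (↑c : Set P) → x ∈ c → (∀ y ∈ c, y ≤ x) → c.card ≤ i

/-- `u_i(x)`: the number of chains with `h - i + 1` elements whose minimum element is `x`
(`h` being the height of the poset). -/
noncomputable def uCount {P : Type*} [PartialOrder P] (h i : ℕ) (x : P) : ℕ :=
  Set.ncard {c : Finset P | IsChain (· ≤ ·) (↑c : Set P) ∧ x ∈ c ∧
    (∀ y ∈ c, x ≤ y) ∧ c.card = h - i + 1}

section Chains

variable {P : Type*} [PartialOrder P]

theorem IsChain.exists_forall_le_of_nonempty {c : Finset P}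
    (hc : IsChain (· ≤ ·) (↑c : Set P)) (hne : c.Nonempty) : ∃ x ∈ c, ∀ z ∈ c, z ≤ x := by
  obtain ⟨x, hx, hmax⟩ := c.exists_maximal hne
  refine ⟨x, hx, fun z hz => ?_⟩
  rcases eq_or_ne z x with rfl | hzx
  · rfl
  · exact (hc hz hx hzx).elim id (hmax hz)

theorem isChain_insert_of_forall_le [DecidableEq P] {c : Finset P} {x : P}
    (hc : IsChain (· ≤ ·) (↑c : Set P)) (hx : ∀ z ∈ c, x ≤ z) :
    IsChain (· ≤ ·) (↑(insert x c) : Set P) := by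
  rw [coe_insert]
  exact hc.insert fun z hz _ => Or.inl (hx z hz)

theorem isChain_insert_of_forall_ge [DecidableEq P] {c : Finset P} {x : P}
    (hc : IsChain (· ≤ ·) (↑c : Set P)) (hx : ∀ z ∈ c, z ≤ x) :
    IsChain (· ≤ ·) (↑(insert x c) : Set P) := by
  rw [coe_insert]
  exact hc.insert fun z hz _ => Or.inr (hx z hz)

namespace levelAt

theorem card_lt {n : ℕ} {x y : P} (hy : levelAt n y) (hxy : x < y) {c : Finset P}
    (hc : IsChain (· ≤ ·) (↑c : Set P)) (hcx : ∀ z ∈ c, z ≤ x) : c.card < n := by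
  classical
  have hcy : ∀ z ∈ c, z ≤ y := fun z hz => (hcx z hz).trans hxy.le
  have hyc : y ∉ c := fun hyc => hxy.not_ge (hcx y hyc)
  have hle := hy.2 (insert y c) (isChain_insert_of_forall_ge hc hcy) (mem_insert_self y c)
    (forall_mem_insert _ _ _ |>.mpr ⟨le_rfl, hcy⟩)
  rw [card_insert_of_notMem hyc] at hle
  omega

theorem exists_lt {i : ℕ} (hi : 1 ≤ i) {y : P} (hy : levelAt (i + 1) y) :
    ∃ x, levelAt i x ∧ x < y := by
  classical
  obtain ⟨c, hc, hyc, hcy, hcard⟩ := hy.1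
  have hd : IsChain (· ≤ ·) (↑(c.erase y) : Set P) := hc.mono (coe_subset.mpr (erase_subset y c))
  have hdcard : (c.erase y).card = i := by rw [card_erase_of_mem hyc, hcard]; rfl
  obtain ⟨x, hxd, hdx⟩ := hd.exists_forall_le_of_nonempty (card_pos.mp (by omega))
  have hxy : x < y := (hcy x (mem_of_mem_erase hxd)).lt_of_ne (ne_of_mem_erase hxd)
  refine ⟨x, ⟨⟨c.erase y, hd, hxd, hdx, hdcard⟩, fun e he _ hex => ?_⟩, hxy⟩
  have := hy.card_lt hxy he hex
  omega

end levelAt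

section Counting

variable [Fintype P]

open scoped Classical in
noncomputable def chainsWithMin (n : ℕ) (x : P) : Finset (Finset P) :=
  {c | IsChain (· ≤ ·) (↑c : Set P) ∧ x ∈ c ∧ (∀ y ∈ c, x ≤ y) ∧ c.card = n}

theorem mem_chainsWithMin {n : ℕ} {x : P} {c : Finset P} :
    c ∈ chainsWithMin n x ↔
      IsChain (· ≤ ·) (↑c : Set P) ∧ x ∈ c ∧ (∀ y ∈ c, x ≤ y) ∧ c.card = n := by
  simp [chainsWithMin]

theorem uCount_eq_card_chainsWithMin (h i : ℕ) (x : P) :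
    uCount h i x = #(chainsWithMin (h - i + 1) x) := by
  rw [uCount, ← Set.ncard_coe_finset]
  congr 1
  ext c
  simp [mem_chainsWithMin]

theorem eq_of_mem_chainsWithMin {n : ℕ} {x y : P} {c : Finset P}
    (hx : c ∈ chainsWithMin n x) (hy : c ∈ chainsWithMin n y) : x = y := by
  rw [mem_chainsWithMin] at hx hy
  exact (hx.2.2.1 y hy.2.1).antisymm (hy.2.2.1 x hx.2.1)

theorem notMem_of_lt_of_mem_chainsWithMin {n : ℕ} {x y : P} {c : Finset P} (hxy : x < y)
    (hc : c ∈ chainsWithMin n y) : x ∉ c :=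
  fun hx => hxy.not_ge ((mem_chainsWithMin.mp hc).2.2.1 x hx)

theorem insert_mem_chainsWithMin [DecidableEq P] {n : ℕ} {x y : P} {c : Finset P} (hxy : x < y)
    (hc : c ∈ chainsWithMin n y) : insert x c ∈ chainsWithMin (n + 1) x := by
  have hxc := notMem_of_lt_of_mem_chainsWithMin hxy hc
  obtain ⟨hchain, -, hyc, hcard⟩ := mem_chainsWithMin.mp hc
  have hxle : ∀ z ∈ c, x ≤ z := fun z hz => hxy.le.trans (hyc z hz)
  exact mem_chainsWithMin.mpr ⟨isChain_insert_of_forall_le hchain hxle, mem_insert_self x c,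
    forall_mem_insert _ _ _ |>.mpr ⟨le_rfl, hxle⟩, by rw [card_insert_of_notMem hxc, hcard]⟩

theorem sum_card_chainsWithMin_le {A B : Finset P} {n : ℕ} (hAB : ∀ y ∈ B, ∃ x ∈ A, x < y) :
    ∑ y ∈ B, #(chainsWithMin n y) ≤ ∑ x ∈ A, #(chainsWithMin (n + 1) x) := by
  classical
  choose! f hfA hf using hAB
  rw [← card_sigma, ← card_sigma]
  refine card_le_card_of_injOn (fun p => ⟨f p.1, insert (f p.1) p.2⟩) ?_ ?_
  · rintro ⟨y, c⟩ hp
    simp only [coe_sigma, Set.mem_sigma_iff, mem_coe] at hp ⊢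
    exact ⟨hfA y hp.1, insert_mem_chainsWithMin (hf y hp.1) hp.2⟩
  · rintro ⟨y, c⟩ hp ⟨y', c'⟩ hp' heq
    simp only [coe_sigma, Set.mem_sigma_iff, mem_coe] at hp hp'
    simp only [Sigma.mk.injEq] at heq
    obtain ⟨hfy, hins⟩ := heq
    rw [hfy, heq_eq_eq] at hins
    have hcc' : c = c' := by
      rw [← erase_insert (notMem_of_lt_of_mem_chainsWithMin (hf y hp.1) hp.2), hfy, hins,
        erase_insert (notMem_of_lt_of_mem_chainsWithMin (hf y' hp'.1) hp'.2)]
    subst hcc'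
    rw [eq_of_mem_chainsWithMin hp.2 hp'.2]

end Counting

end Chains

theorem stmt_9_general {P : Type*} [Fintype P] [PartialOrder P] (h : ℕ)
    (A : ℕ → Finset P) (hA : ∀ i x, x ∈ A i ↔ levelAt i x)
    (i : ℕ) (hi : 1 ≤ i) (hih : i ≤ h - 1) :
    ∑ x ∈ A (i + 1), uCount h (i + 1) x ≤ ∑ x ∈ A i, uCount h i x := by
  have hlen : h - i + 1 = h - (i + 1) + 1 + 1 := by omega
  simp only [uCount_eq_card_chainsWithMin, hlen]
  refine sum_card_chainsWithMin_le fun y hy => ?_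
  obtain ⟨x, hx, hxy⟩ := ((hA (i + 1) y).mp hy).exists_lt hi
  exact ⟨x, (hA i x).mpr hx, hxy⟩

/-- `Σ_i ≥ Σ_{i+1}` for the canonical antichain decomposition:
`Σ_i = Σ_{x ∈ A_i} u_i(x)` is non-increasing in `i` for `1 ≤ i ≤ h − 1`. -/
theorem stmt_9 {P : Type*} [Fintype P] [PartialOrder P] (h : ℕ)
    (hh : (∃ c : Finset P, c.card = h ∧ IsChain (· ≤ ·) (↑c : Set P)) ∧
      ∀ c : Finset P, IsChain (· ≤ ·) (↑c : Set P) → c.card ≤ h)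
    (A : ℕ → Finset P) (hA : ∀ i x, x ∈ A i ↔ levelAt i x)
    (i : ℕ) (hi : 1 ≤ i) (hih : i ≤ h - 1) :
    ∑ x ∈ A (i + 1), uCount h (i + 1) x ≤ ∑ x ∈ A i, uCount h i x :=
  stmt_9_general h A hA i hi hih
end

section
/- Let P be a finite poset whose canonical antichain decomposition is A_1, ..., A_{k+ℓ} (so the height of P is k+ℓ), let w(P) ≤ k+ℓ, let n = |P| = q(k+ℓ+1) + (k−q)(k+ℓ) with 0 < q ≤ k, and let F = {i ∈ [k+ℓ] : |A_i| ≥ k+1}. Then for every subset I ⊆ [k+ℓ], |F| ≥ (q + Σ_{i∈I}(k − |A_i|)) / ℓ. -/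
open Finset

section Levels

variable {P : Type*} [PartialOrder P]

theorem levelAt.unique {i j : ℕ} {x : P} (hi : levelAt i x) (hj : levelAt j x) : i = j := by
  obtain ⟨⟨c, hc, hxc, hcx, rfl⟩, hi⟩ := hi
  obtain ⟨⟨d, hd, hxd, hdx, rfl⟩, hj⟩ := hj
  exact le_antisymm (hj c hc hxc hcx) (hi d hd hxd hdx)

/-- A chain topped by `x < y` extends to a longer chain topped by `y`. -/
theorem isAntichain_setOf_levelAt (i : ℕ) : IsAntichain (· ≤ ·) {x : P | levelAt i x} := by
  classical
  intro x hx y hy hxy hle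
  obtain ⟨⟨c, hc, hxc, hcx, rfl⟩, _⟩ := hx
  have hyc : y ∉ c := fun h => hxy (le_antisymm hle (hcx y h))
  have hlonger := hy.2 (insert y c) ?_ (mem_insert_self y c) ?_
  · rw [card_insert_of_notMem hyc] at hlonger
    omega
  · rw [coe_insert]
    exact hc.insert fun b hb _ => Or.inr ((hcx b hb).trans hle)
  · simp only [mem_insert, forall_eq_or_imp]
    exact ⟨le_rfl, fun z hz => (hcx z hz).trans hle⟩

theorem exists_levelAt {m : ℕ}
    (hm : ∀ c : Finset P, IsChain (· ≤ ·) (↑c : Set P) → c.card ≤ m) (x : P) :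
    ∃ i ∈ Icc 1 m, levelAt i x := by
  classical
  let chainTo (i : ℕ) : Prop := ∃ c : Finset P,
    IsChain (· ≤ ·) (↑c : Set P) ∧ x ∈ c ∧ (∀ y ∈ c, y ≤ x) ∧ c.card = i
  have hsingleton : IsChain (· ≤ ·) (↑({x} : Finset P) : Set P) := by
    rw [coe_singleton]
    exact Set.subsingleton_singleton.isChain
  have hx : chainTo 1 := ⟨{x}, hsingleton, mem_singleton_self x, by simp, card_singleton x⟩
  have h1m : 1 ≤ m := by simpa using hm {x} hsingleton
  refine ⟨Nat.findGreatest chainTo m, mem_Icc.2 ⟨Nat.le_findGreatest h1m hx,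
    Nat.findGreatest_le m⟩, Nat.findGreatest_spec h1m hx, fun c hc hxc hcx => ?_⟩
  exact Nat.le_findGreatest (hm c hc) ⟨c, hc, hxc, hcx, rfl⟩

theorem sum_card_levels [Fintype P] {m : ℕ}
    (hm : ∀ c : Finset P, IsChain (· ≤ ·) (↑c : Set P) → c.card ≤ m)
    (A : ℕ → Finset P) (hA : ∀ i x, x ∈ A i ↔ levelAt i x) :
    ∑ i ∈ Icc 1 m, (A i).card = Fintype.card P := by
  classical
  have hdisj : (↑(Icc 1 m) : Set ℕ).PairwiseDisjoint A := by
    intro i _ j _ hij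
    refine disjoint_left.2 fun x hxi hxj => hij ?_
    exact ((hA i x).1 hxi).unique ((hA j x).1 hxj)
  have hcover : (Icc 1 m).biUnion A = univ := by
    refine eq_univ_of_forall fun x => mem_biUnion.2 ?_
    obtain ⟨i, hi, hx⟩ := exists_levelAt hm x
    exact ⟨i, hi, (hA i x).2 hx⟩
  rw [← card_biUnion hdisj, hcover, card_univ]

end Levels

theorem add_sum_sub_le_mul_card_filter {ι : Type*} [DecidableEq ι] {S I : Finset ι}
    (hI : I ⊆ S) {a : ι → ℕ} {k ℓ q : ℕ} (hsum : ∑ i ∈ S, a i = k * S.card + q)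
    (hle : ∀ i ∈ S, a i ≤ k + ℓ) :
    (q : ℝ) + ∑ i ∈ I, ((k : ℝ) - a i) ≤ (S.filter fun i => k + 1 ≤ a i).card * ℓ := by
  have hexcess : ∑ i ∈ S, ((a i : ℝ) - k) = q := by
    rw [sum_sub_distrib, sum_const, nsmul_eq_mul]
    have := congrArg (Nat.cast : ℕ → ℝ) hsum
    push_cast at this
    linarith
  have hcomplement : (q : ℝ) + ∑ i ∈ I, ((k : ℝ) - a i) = ∑ i ∈ S \ I, ((a i : ℝ) - k) := by
    rw [← hexcess, ← sum_sdiff hI]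
    simp only [← neg_sub (a _ : ℝ) k, sum_neg_distrib]
    ring
  have hterm : ∀ i ∈ S, (a i : ℝ) - k ≤ if k + 1 ≤ a i then (ℓ : ℝ) else 0 := by
    intro i hi
    have : (a i : ℝ) ≤ k + ℓ := by exact_mod_cast hle i hi
    split_ifs with h
    · linarith
    · have : (a i : ℝ) ≤ k := by exact_mod_cast Nat.le_of_lt_succ (not_le.1 h)
      linarith
  calc (q : ℝ) + ∑ i ∈ I, ((k : ℝ) - a i)
      = ∑ i ∈ S \ I, ((a i : ℝ) - k) := hcomplement
    _ ≤ ∑ i ∈ S \ I, if k + 1 ≤ a i then (ℓ : ℝ) else 0 :=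
        sum_le_sum fun i hi => hterm i (sdiff_subset hi)
    _ ≤ ∑ i ∈ S, if k + 1 ≤ a i then (ℓ : ℝ) else 0 :=
        sum_le_sum_of_subset_of_nonneg sdiff_subset fun _ _ _ => by positivity
    _ = (S.filter fun i => k + 1 ≤ a i).card * ℓ := by
        rw [← sum_filter, sum_const, nsmul_eq_mul]

theorem stmt_11_general {P : Type*} [Fintype P] [PartialOrder P] (k ℓ q : ℕ)
    (hqk : q ≤ k)
    (hh : (∃ c : Finset P, c.card = k + ℓ ∧ IsChain (· ≤ ·) (↑c : Set P)) ∧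
      ∀ c : Finset P, IsChain (· ≤ ·) (↑c : Set P) → c.card ≤ k + ℓ)
    (hw : ∀ s : Finset P, IsAntichain (· ≤ ·) (↑s : Set P) → s.card ≤ k + ℓ)
    (A : ℕ → Finset P) (hA : ∀ i x, x ∈ A i ↔ levelAt i x)
    (hn : Fintype.card P = q * (k + ℓ + 1) + (k - q) * (k + ℓ)) :
    ∀ I ⊆ Finset.Icc 1 (k + ℓ),
      ((q : ℝ) + ∑ i ∈ I, ((k : ℝ) - ((A i).card : ℝ))) / (ℓ : ℝ) ≤
        ((((Finset.Icc 1 (k + ℓ)).filter fun i => k + 1 ≤ (A i).card).card : ℕ) : ℝ) := by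
  intro I hI
  have hlevels : ∑ i ∈ Icc 1 (k + ℓ), (A i).card = k * (Icc 1 (k + ℓ)).card + q := by
    rw [sum_card_levels hh.2 A hA, hn, Nat.card_Icc, Nat.add_sub_cancel]
    obtain ⟨r, rfl⟩ := Nat.exists_eq_add_of_le hqk
    rw [Nat.add_sub_cancel_left]
    ring
  have hsmall : ∀ i ∈ Icc 1 (k + ℓ), (A i).card ≤ k + ℓ := fun i _ =>
    hw (A i) (by convert isAntichain_setOf_levelAt (P := P) i; ext; exact hA i _)
  exact div_le_of_le_mul₀ (by positivity) (by positivity)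
    (add_sum_sub_le_mul_card_filter hI hlevels hsmall)

/-- If a poset of height `k+ℓ` and width at most `k+ℓ` has
`n = q(k+ℓ+1) + (k−q)(k+ℓ)` elements with `0 < q ≤ k`, then for
`F = {i ∈ [k+ℓ] : |A_i| ≥ k+1}` and any `I ⊆ [k+ℓ]` one has
`|F| ≥ (q + Σ_{i∈I}(k − |A_i|))/ℓ`. -/
theorem stmt_11 {P : Type*} [Fintype P] [PartialOrder P] (k ℓ q : ℕ)
    (hk : 0 < k) (hℓ : 0 < ℓ) (hq : 0 < q) (hqk : q ≤ k)
    (hh : (∃ c : Finset P, c.card = k + ℓ ∧ IsChain (· ≤ ·) (↑c : Set P)) ∧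
      ∀ c : Finset P, IsChain (· ≤ ·) (↑c : Set P) → c.card ≤ k + ℓ)
    (hw : ∀ s : Finset P, IsAntichain (· ≤ ·) (↑s : Set P) → s.card ≤ k + ℓ)
    (A : ℕ → Finset P) (hA : ∀ i x, x ∈ A i ↔ levelAt i x)
    (hn : Fintype.card P = q * (k + ℓ + 1) + (k - q) * (k + ℓ)) :
    ∀ I ⊆ Finset.Icc 1 (k + ℓ),
      ((q : ℝ) + ∑ i ∈ I, ((k : ℝ) - ((A i).card : ℝ))) / (ℓ : ℝ) ≤
        ((((Finset.Icc 1 (k + ℓ)).filter fun i => k + 1 ≤ (A i).card).card : ℕ) : ℝ) :=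
  stmt_11_general k ℓ q hqk hh hw A hA hn
end

section
/- Let P be a finite poset of height h with canonical antichain decomposition A_1, ..., A_h and bipartite Hasse graphs G_i on A_i ∪ A_{i+1}. Fix i ∈ [h−1] with |A_i| ≥ k+1, and let B_{i+1} ⊆ A_{i+1} be the set of elements y with u_{i+1}(y) ≥ 1 having exactly one G_i-neighbor in A_i. Then A_i ∪ B_{i+1} contains at least 2^{min{k, |B_{i+1}|}} antichains with k+1 elements. -/
section Levels

variable {P : Type*} [PartialOrder P] {i j : ℕ} {x y : P}

theorem levelAt_unique (hi : levelAt i x) (hj : levelAt j x) : i = j := by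
  obtain ⟨⟨c, hc, hxc, hcx, rfl⟩, hmaxi⟩ := hi
  obtain ⟨⟨d, hd, hxd, hdx, rfl⟩, hmaxj⟩ := hj
  exact le_antisymm (hmaxj c hc hxc hcx) (hmaxi d hd hxd hdx)

/-- A longest chain topped by `x` extends by `y`. -/
theorem levelAt_lt_of_lt (hx : levelAt i x) (hy : levelAt j y) (hxy : x < y) : i < j := by
  classical
  obtain ⟨⟨c, hc, -, hcx, rfl⟩, -⟩ := hx
  have hcy : ∀ z ∈ c, z ≤ y := fun z hz => (hcx z hz).trans hxy.le
  have hyc : y ∉ c := fun hyc => hxy.not_ge (hcx y hyc)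
  have hchain : IsChain (· ≤ ·) (↑(insert y c) : Set P) := by
    rw [Finset.coe_insert]
    exact hc.insert fun z hz _ => Or.inr (hcy z hz)
  have hle := hy.2 (insert y c) hchain (Finset.mem_insert_self y c) <| by
    simpa only [Finset.forall_mem_insert] using ⟨le_rfl, hcy⟩
  rwa [Finset.card_insert_of_notMem hyc, Nat.add_one_le_iff] at hle

theorem levelAt_le_of_le (hx : levelAt i x) (hy : levelAt j y) (hxy : x ≤ y) : i ≤ j := by
  obtain rfl | hlt := hxy.eq_or_lt
  · exact (levelAt_unique hx hy).le
  · exact (levelAt_lt_of_lt hx hy hlt).le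

theorem isAntichain_of_forall_levelAt {s : Set P} (hs : ∀ x ∈ s, levelAt i x) :
    IsAntichain (· ≤ ·) s := fun x hx y hy hne hxy =>
  (levelAt_lt_of_lt (hs x hx) (hs y hy) (lt_of_le_of_ne hxy hne)).false

end Levels

section Antichains

variable {P : Type*} [PartialOrder P] [DecidableEq P] {s t : Finset P}

theorem exists_antichain_inter_eq (hs : IsAntichain (· ≤ ·) (s : Set P))
    (ht : IsAntichain (· ≤ ·) (t : Set P)) (hts : ∀ b ∈ t, ∀ a ∈ s, ¬b ≤ a)
    (hbelow : ∀ b ∈ t, ({a ∈ s | a ≤ b} : Set P).Subsingleton)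
    {k : ℕ} (hk : k + 1 ≤ s.card) {Y : Finset P} (hYt : Y ⊆ t) (hYk : Y.card ≤ k) :
    ∃ L : Finset P, L.card = k + 1 ∧ IsAntichain (· ≤ ·) (L : Set P) ∧ L ⊆ s ∪ t ∧
      L ∩ t = Y := by
  classical
  set N := s.filter fun a => ∃ b ∈ Y, a ≤ b
  have hN : N.card ≤ Y.card :=
    Finset.card_le_card_of_forall_subsingleton (· ≤ ·) (fun a ha => (Finset.mem_filter.1 ha).2)
      fun b hb => (hbelow b (hYt hb)).anti fun a ha => ⟨(Finset.mem_filter.1 ha.1).1, ha.2⟩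
  have hroom : k + 1 - Y.card ≤ (s \ N).card := by
    have := Finset.le_card_sdiff N s
    omega
  obtain ⟨T, hTsN, hTcard⟩ := Finset.exists_subset_card_eq hroom
  have hTs : T ⊆ s := hTsN.trans Finset.sdiff_subset
  have hTt : Disjoint T t := Finset.disjoint_left.2 fun a haT hat =>
    hts a hat a (hTs haT) le_rfl
  refine ⟨Y ∪ T, ?_, ?_,
    Finset.union_subset (hYt.trans Finset.subset_union_right) (hTs.trans Finset.subset_union_left),
    ?_⟩
  · rw [Finset.card_union_of_disjoint (hTt.symm.mono_left hYt), hTcard]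
    omega
  · rw [Finset.coe_union, isAntichain_union]
    refine ⟨ht.subset (by exact_mod_cast hYt), hs.subset (by exact_mod_cast hTs), ?_⟩
    intro b hb a ha _
    have haN : a ∉ N := (Finset.mem_sdiff.1 (hTsN ha)).2
    exact ⟨hts b (hYt hb) a (hTs ha),
      fun hab => haN (Finset.mem_filter.2 ⟨hTs ha, b, hb, hab⟩)⟩
  · rw [Finset.union_inter_distrib_right, Finset.inter_eq_left.2 hYt,
      Finset.disjoint_iff_inter_eq_empty.1 hTt, Finset.union_empty]

theorem two_pow_le_ncard_antichains (hs : IsAntichain (· ≤ ·) (s : Set P))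
    (ht : IsAntichain (· ≤ ·) (t : Set P)) (hts : ∀ b ∈ t, ∀ a ∈ s, ¬b ≤ a)
    (hbelow : ∀ b ∈ t, ({a ∈ s | a ≤ b} : Set P).Subsingleton)
    {k : ℕ} (hk : k + 1 ≤ s.card) :
    2 ^ min k t.card ≤ Set.ncard {L : Finset P | L.card = k + 1 ∧
      IsAntichain (· ≤ ·) (↑L : Set P) ∧ L ⊆ s ∪ t} := by
  set S := {L : Finset P | L.card = k + 1 ∧ IsAntichain (· ≤ ·) (↑L : Set P) ∧ L ⊆ s ∪ t}
  obtain ⟨t₀, ht₀t, ht₀card⟩ := Finset.exists_subset_card_eq (min_le_right k t.card)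
  have hS : S.Finite := (s ∪ t).powerset.finite_toSet.subset fun L hL =>
    Finset.mem_coe.2 (Finset.mem_powerset.2 hL.2.2)
  have hcover : (t₀.powerset : Set (Finset P)) ⊆ (· ∩ t) '' S := by
    intro Y hY
    have hYt₀ : Y ⊆ t₀ := Finset.mem_powerset.1 hY
    have hYk : Y.card ≤ k := (Finset.card_le_card hYt₀).trans (ht₀card.trans_le (min_le_left _ _))
    obtain ⟨L, hLcard, hLanti, hLst, hLY⟩ :=
      exists_antichain_inter_eq hs ht hts hbelow hk (hYt₀.trans ht₀t) hYk
    exact ⟨L, ⟨hLcard, hLanti, hLst⟩, hLY⟩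
  calc 2 ^ min k t.card = (t₀.powerset : Set (Finset P)).ncard := by
        rw [Set.ncard_coe_finset, Finset.card_powerset, ht₀card]
    _ ≤ ((· ∩ t) '' S).ncard := Set.ncard_le_ncard hcover (hS.image _)
    _ ≤ S.ncard := Set.ncard_image_le hS

end Antichains

theorem stmt_12_general {P : Type*} [DecidableEq P] [PartialOrder P] (h k i : ℕ)
    (A : ℕ → Finset P) (hA : ∀ j x, x ∈ A j ↔ levelAt j x)
    (hAi : k + 1 ≤ (A i).card)
    (B : Finset P)
    (hB : ∀ y, y ∈ B ↔ y ∈ A (i + 1) ∧ 1 ≤ uCount h (i + 1) y ∧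
      ∃! x, x ∈ A i ∧ x ≤ y) :
    2 ^ min k B.card ≤ Set.ncard {s : Finset P | s.card = k + 1 ∧
      IsAntichain (· ≤ ·) (↑s : Set P) ∧ s ⊆ A i ∪ B} := by
  have hBlevel : ∀ y ∈ B, levelAt (i + 1) y := fun y hy => (hA _ y).1 ((hB y).1 hy).1
  have hAlevel : ∀ x ∈ A i, levelAt i x := fun x hx => (hA i x).1 hx
  refine two_pow_le_ncard_antichains (isAntichain_of_forall_levelAt hAlevel)
    (isAntichain_of_forall_levelAt hBlevel) ?_ ?_ hAi
  · intro b hb a ha hba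
    have := levelAt_le_of_le (hBlevel b hb) (hAlevel a ha) hba
    omega
  · exact fun b hb a₁ ha₁ a₂ ha₂ => ((hB b).1 hb).2.2.unique ha₁ ha₂

/-- If `|A_i| ≥ k+1` and `B_{i+1}` is the set of elements of `A_{i+1}` lying on a maximum
chain that have exactly one neighbor in `A_i`, then `A_i ∪ B_{i+1}` contains at least
`2^min{k,|B_{i+1}|}` antichains with `k+1` elements. -/
theorem stmt_12 {P : Type*} [Fintype P] [DecidableEq P] [PartialOrder P] (h k i : ℕ)
    (hh : (∃ c : Finset P, c.card = h ∧ IsChain (· ≤ ·) (↑c : Set P)) ∧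
      ∀ c : Finset P, IsChain (· ≤ ·) (↑c : Set P) → c.card ≤ h)
    (A : ℕ → Finset P) (hA : ∀ j x, x ∈ A j ↔ levelAt j x)
    (hi : 1 ≤ i) (hih : i ≤ h - 1) (hAi : k + 1 ≤ (A i).card)
    (B : Finset P)
    (hB : ∀ y, y ∈ B ↔ y ∈ A (i + 1) ∧ 1 ≤ uCount h (i + 1) y ∧
      ∃! x, x ∈ A i ∧ x ≤ y) :
    2 ^ min k B.card ≤ Set.ncard {s : Finset P | s.card = k + 1 ∧
      IsAntichain (· ≤ ·) (↑s : Set P) ∧ s ⊆ A i ∪ B} :=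
  stmt_12_general h k i A hA hAi B hB
end

section
/- Let P be a finite poset of height h with canonical antichain decomposition A_1, ..., A_h, let u_i, Σ_i be as in the chain-counting setup, let A'_{i+1} = {y ∈ A_{i+1} : u_{i+1}(y) ≥ 1} and B_{i+1} = {y ∈ A'_{i+1} : y has exactly one G_i-neighbor in A_i}. Then for every i ∈ [h−1], Σ_i ≥ Σ_{i+1} + Σ_{y ∈ A'_{i+1} \ B_{i+1}} u_{i+1}(y) ≥ Σ_{i+1} + |A'_{i+1}| − |B_{i+1}|. -/
/-! Removing the least element `x` from a chain with least element `x` leaves a chain whose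
least element lies above `x`, and this is a bijection, so `u_i(x) = ∑_{y > x} u_{i+1}(y)`.
Summing over `x ∈ A_i` and exchanging the sums, `Σ_i = ∑_y d(y) u_{i+1}(y)` with
`d(y) = #{x ∈ A_i | x < y}`. Dropping the top of a longest chain ending at `y ∈ A_{i+1}` gives
an element of `A_i` below `y`, so `d(y) ≥ 1` on `A_{i+1}`, and `d(y) ≥ 2` on `A'_{i+1} \ B_{i+1}`
because elements of `A_i` and `A_{i+1}` are distinct. Discarding the terms with `y ∉ A_{i+1}`
gives the first inequality; the second holds because `u_{i+1} ≥ 1` on `A'_{i+1}`. -/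

open Finset

theorem Finset.sum_add_sum_le_sum_mul {ι : Type*} {S T : Finset ι} (hST : S ⊆ T) {d u : ι → ℕ}
    (hT : ∀ y ∈ T, 1 ≤ d y) (hS : ∀ y ∈ S, 2 ≤ d y) :
    ∑ y ∈ T, u y + ∑ y ∈ S, u y ≤ ∑ y ∈ T, d y * u y := by
  classical
  calc ∑ y ∈ T, u y + ∑ y ∈ S, u y
      = ∑ y ∈ T \ S, 1 * u y + ∑ y ∈ S, 2 * u y := by
        rw [← sum_sdiff hST]
        simp only [one_mul, two_mul, sum_add_distrib]
        ring
    _ ≤ ∑ y ∈ T \ S, d y * u y + ∑ y ∈ S, d y * u y := by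
        gcongr with y hy y hy
        · exact hT y (mem_sdiff.mp hy).1
        · exact hS y hy
    _ = ∑ y ∈ T, d y * u y := sum_sdiff hST

section Chains

variable {P : Type*} [PartialOrder P]

theorem IsChain.exists_isLeast_of_nonempty {c : Finset P} (hc : IsChain (· ≤ ·) (c : Set P))
    (hne : c.Nonempty) : ∃ y, IsLeast (c : Set P) y := by
  obtain ⟨y, hy⟩ := c.exists_minimal hne
  exact ⟨y, (IsChain.directedOn (r := (· ≥ ·)) hc.symm).minimal_iff_isLeast.mp hy⟩

theorem IsChain.exists_isGreatest_of_nonempty {c : Finset P} (hc : IsChain (· ≤ ·) (c : Set P))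
    (hne : c.Nonempty) : ∃ y, IsGreatest (c : Set P) y := by
  obtain ⟨y, hy⟩ := c.exists_maximal hne
  exact ⟨y, hc.directedOn.maximal_iff_isGreatest.mp hy⟩

variable [Fintype P]

open Classical in
noncomputable def chainsFrom (n : ℕ) (x : P) : Finset (Finset P) :=
  {c | IsChain (· ≤ ·) (c : Set P) ∧ IsLeast (c : Set P) x ∧ #c = n}

theorem mem_chainsFrom {n : ℕ} {x : P} {c : Finset P} :
    c ∈ chainsFrom n x ↔ IsChain (· ≤ ·) (c : Set P) ∧ IsLeast (c : Set P) x ∧ #c = n := by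
  simp [chainsFrom]

theorem uCount_eq_card_chainsFrom (h i : ℕ) (x : P) :
    uCount h i x = #(chainsFrom (h - i + 1) x) := by
  rw [uCount, ← Set.ncard_coe_finset]
  congr 1
  ext c
  simp [mem_chainsFrom, IsLeast, lowerBounds, and_assoc]

theorem notMem_of_mem_chainsFrom {n : ℕ} {x y : P} {c : Finset P} (hxy : x < y)
    (hc : c ∈ chainsFrom n y) : x ∉ c :=
  fun hx => (hxy.trans_le ((mem_chainsFrom.mp hc).2.1.2 hx)).false

theorem insert_mem_chainsFrom [DecidableEq P] {n : ℕ} {x y : P} {c : Finset P} (hxy : x < y)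
    (hc : c ∈ chainsFrom n y) : insert x c ∈ chainsFrom (n + 1) x := by
  have hx := notMem_of_mem_chainsFrom hxy hc
  obtain ⟨hchain, hleast, rfl⟩ := mem_chainsFrom.mp hc
  have hle : ∀ z ∈ (c : Set P), x ≤ z := fun z hz => hxy.le.trans (hleast.2 hz)
  refine mem_chainsFrom.mpr ⟨?_, ?_, card_insert_of_notMem hx⟩
  · rw [coe_insert]
    exact hchain.insert fun z hz _ => .inl (hle z hz)
  · rw [coe_insert]
    exact ⟨Set.mem_insert x _, fun z hz => hz.elim (fun h => h.ge) (hle z)⟩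

theorem exists_erase_mem_chainsFrom [DecidableEq P] {n : ℕ} (hn : n ≠ 0) {x : P} {c : Finset P}
    (hc : c ∈ chainsFrom (n + 1) x) : ∃ y, x < y ∧ c.erase x ∈ chainsFrom n y := by
  obtain ⟨hchain, hleast, hcard⟩ := mem_chainsFrom.mp hc
  have hcard' : #(c.erase x) = n := by rw [card_erase_of_mem hleast.1, hcard]; rfl
  have hchain' : IsChain (· ≤ ·) (c.erase x : Set P) := hchain.mono (by simp)
  obtain ⟨y, hy⟩ := hchain'.exists_isLeast_of_nonempty (card_pos.mp (by omega))
  have hyc : y ∈ c.erase x := hy.1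
  exact ⟨y, (hleast.2 (mem_of_mem_erase hyc)).lt_of_ne (ne_of_mem_erase hyc).symm,
    mem_chainsFrom.mpr ⟨hchain', hy, hcard'⟩⟩

theorem card_chainsFrom_succ [DecidableLT P] {n : ℕ} (hn : n ≠ 0) (x : P) :
    #(chainsFrom (n + 1) x) = ∑ y with x < y, #(chainsFrom n y) := by
  classical
  rw [← card_sigma]
  symm
  refine card_bij (fun p _ => insert x p.2) (fun p hp => ?_) ?_ ?_
  · obtain ⟨hxy, hc⟩ := mem_sigma.mp hp
    exact insert_mem_chainsFrom (mem_filter.mp hxy).2 hc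
  · rintro ⟨y, c⟩ hp ⟨z, d⟩ hq (hcd : insert x c = insert x d)
    simp only [mem_sigma, mem_filter, mem_univ, true_and] at hp hq
    obtain rfl : c = d := by
      rw [← erase_insert (notMem_of_mem_chainsFrom hp.1 hp.2),
        ← erase_insert (notMem_of_mem_chainsFrom hq.1 hq.2), hcd]
    obtain rfl : y = z := (mem_chainsFrom.mp hp.2).2.1.unique (mem_chainsFrom.mp hq.2).2.1
    rfl
  · intro c hc
    obtain ⟨y, hxy, hy⟩ := exists_erase_mem_chainsFrom hn hc
    exact ⟨⟨y, c.erase x⟩, mem_sigma.mpr ⟨mem_filter.mpr ⟨mem_univ y, hxy⟩, hy⟩,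
      insert_erase (mem_chainsFrom.mp hc).2.1.1⟩

theorem sum_uCount_eq_sum_card_lt_mul [DecidableLT P] {h i : ℕ} (hih : i < h) (A : Finset P) :
    ∑ x ∈ A, uCount h i x = ∑ y, #{x ∈ A | x < y} * uCount h (i + 1) y := by
  have hsucc : h - i + 1 = h - (i + 1) + 1 + 1 := by omega
  simp only [uCount_eq_card_chainsFrom, hsucc, card_chainsFrom_succ (Nat.succ_ne_zero _),
    card_filter, sum_mul, ite_mul, one_mul, zero_mul, sum_filter]
  exact sum_comm

end Chains

section Levels

variable {P : Type*} [PartialOrder P]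

theorem levelAt.exists_lt_s13 [DecidableEq P] {i : ℕ} (hi : 1 ≤ i) {y : P} (hy : levelAt (i + 1) y) :
    ∃ x, levelAt i x ∧ x < y := by
  obtain ⟨⟨c, hc, hyc, hcy, hcard⟩, hmax⟩ := hy
  have hcard' : #(c.erase y) = i := by rw [card_erase_of_mem hyc, hcard]; rfl
  have hchain' : IsChain (· ≤ ·) (c.erase y : Set P) := hc.mono (by simp)
  obtain ⟨x, hx⟩ := hchain'.exists_isGreatest_of_nonempty (card_pos.mp (by omega))
  have hxc : x ∈ c.erase y := hx.1
  have hxy : x < y := (hcy x (mem_of_mem_erase hxc)).lt_of_ne (ne_of_mem_erase hxc)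
  refine ⟨x, ⟨⟨_, hchain', hxc, fun z hz => hx.2 hz, hcard'⟩, fun e he hxe hex => ?_⟩, hxy⟩
  have hye : y ∉ e := fun hye => (hxy.trans_le (hex y hye)).false
  have hle : ∀ z ∈ insert y e, z ≤ y := by
    simpa using fun z hz => (hex z hz).trans hxy.le
  have hchain : IsChain (· ≤ ·) ((insert y e : Finset P) : Set P) := by
    simpa using he.insert fun z hz _ => .inr (hle z (mem_insert_of_mem hz))
  have := hmax (insert y e) hchain (mem_insert_self y e) hle
  rw [card_insert_of_notMem hye] at this
  omega

variable [DecidableEq P] [DecidableLT P] {i : ℕ} {A : Finset P} {y : P}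

theorem one_le_card_lt_of_levelAt_succ (hi : 1 ≤ i) (hA : ∀ x, x ∈ A ↔ levelAt i x)
    (hy : levelAt (i + 1) y) : 1 ≤ #{x ∈ A | x < y} := by
  obtain ⟨x, hx, hxy⟩ := hy.exists_lt_s13 hi
  exact card_pos.mpr ⟨x, mem_filter.mpr ⟨(hA x).mpr hx, hxy⟩⟩

theorem two_le_card_lt_of_levelAt_succ (hi : 1 ≤ i) (hA : ∀ x, x ∈ A ↔ levelAt i x)
    (hy : levelAt (i + 1) y) (hy' : ¬∃! x, x ∈ A ∧ x ≤ y) : 2 ≤ #{x ∈ A | x < y} := by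
  obtain ⟨x₀, hx₀, hx₀y⟩ := hy.exists_lt_s13 hi
  obtain ⟨x₁, ⟨hx₁, hx₁y⟩, hne⟩ : ∃ x₁, (x₁ ∈ A ∧ x₁ ≤ y) ∧ x₁ ≠ x₀ := by
    by_contra! h
    exact hy' ⟨x₀, ⟨(hA x₀).mpr hx₀, hx₀y.le⟩, h⟩
  have hx₁y' : x₁ < y := hx₁y.lt_of_ne fun h => by
    have := ((hA x₁).mp hx₁).unique (h ▸ hy)
    omega
  exact one_lt_card.mpr ⟨x₁, mem_filter.mpr ⟨hx₁, hx₁y'⟩, x₀,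
    mem_filter.mpr ⟨(hA x₀).mpr hx₀, hx₀y⟩, hne⟩

end Levels

theorem stmt_13_general {P : Type*} [Fintype P] [DecidableEq P] [PartialOrder P] (h i : ℕ)
    (A : ℕ → Finset P) (hA : ∀ j x, x ∈ A j ↔ levelAt j x)
    (hi : 1 ≤ i) (hih : i ≤ h - 1)
    (A' B : Finset P)
    (hA' : ∀ y, y ∈ A' ↔ y ∈ A (i + 1) ∧ 1 ≤ uCount h (i + 1) y)
    (hB : ∀ y, y ∈ B ↔ y ∈ A' ∧ ∃! x, x ∈ A i ∧ x ≤ y) :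
    (∑ x ∈ A (i + 1), uCount h (i + 1) x) + ∑ y ∈ A' \ B, uCount h (i + 1) y ≤
        ∑ x ∈ A i, uCount h i x ∧
      A'.card - B.card ≤ ∑ y ∈ A' \ B, uCount h (i + 1) y ∧
      (∑ x ∈ A (i + 1), uCount h (i + 1) x) + (A'.card - B.card) ≤
        ∑ x ∈ A i, uCount h i x := by
  classical
  set u : P → ℕ := uCount h (i + 1)
  have hS : A' \ B ⊆ A (i + 1) := fun y hy => ((hA' y).mp (mem_sdiff.mp hy).1).1
  have hchains : ∑ y ∈ A (i + 1), u y + ∑ y ∈ A' \ B, u y ≤ ∑ x ∈ A i, uCount h i x :=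
    calc ∑ y ∈ A (i + 1), u y + ∑ y ∈ A' \ B, u y
        ≤ ∑ y ∈ A (i + 1), #{x ∈ A i | x < y} * u y :=
          sum_add_sum_le_sum_mul hS
            (fun y hy => one_le_card_lt_of_levelAt_succ hi (hA i) ((hA _ y).mp hy))
            fun y hy => two_le_card_lt_of_levelAt_succ hi (hA i) ((hA _ y).mp (hS hy))
              fun hu => (mem_sdiff.mp hy).2 ((hB y).mpr ⟨(mem_sdiff.mp hy).1, hu⟩)
      _ ≤ ∑ y, #{x ∈ A i | x < y} * u y := sum_le_univ_sum_of_nonneg fun _ => Nat.zero_le _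
      _ = ∑ x ∈ A i, uCount h i x := (sum_uCount_eq_sum_card_lt_mul (by omega) (A i)).symm
  have hcard : #A' - #B ≤ ∑ y ∈ A' \ B, u y := by
    rw [← card_sdiff_of_subset fun y hy => ((hB y).mp hy).1]
    simpa using card_nsmul_le_sum _ u 1 fun y hy => ((hA' y).mp (mem_sdiff.mp hy).1).2
  exact ⟨hchains, hcard, (Nat.add_le_add_left hcard _).trans hchains⟩

/-- With `A'_{i+1} = {y ∈ A_{i+1} : u_{i+1}(y) ≥ 1}` and
`B_{i+1} = {y ∈ A'_{i+1}` with exactly one neighbor in `A_i}`, one has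
`Σ_i ≥ Σ_{i+1} + Σ_{y ∈ A'_{i+1} \ B_{i+1}} u_{i+1}(y) ≥ Σ_{i+1} + |A'_{i+1}| − |B_{i+1}|`. -/
theorem stmt_13 {P : Type*} [Fintype P] [DecidableEq P] [PartialOrder P] (h i : ℕ)
    (hh : (∃ c : Finset P, c.card = h ∧ IsChain (· ≤ ·) (↑c : Set P)) ∧
      ∀ c : Finset P, IsChain (· ≤ ·) (↑c : Set P) → c.card ≤ h)
    (A : ℕ → Finset P) (hA : ∀ j x, x ∈ A j ↔ levelAt j x)
    (hi : 1 ≤ i) (hih : i ≤ h - 1)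
    (A' B : Finset P)
    (hA' : ∀ y, y ∈ A' ↔ y ∈ A (i + 1) ∧ 1 ≤ uCount h (i + 1) y)
    (hB : ∀ y, y ∈ B ↔ y ∈ A' ∧ ∃! x, x ∈ A i ∧ x ≤ y) :
    (∑ x ∈ A (i + 1), uCount h (i + 1) x) + ∑ y ∈ A' \ B, uCount h (i + 1) y ≤
        ∑ x ∈ A i, uCount h i x ∧
      A'.card - B.card ≤ ∑ y ∈ A' \ B, uCount h (i + 1) y ∧
      (∑ x ∈ A (i + 1), uCount h (i + 1) x) + (A'.card - B.card) ≤
        ∑ x ∈ A i, uCount h i x :=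
  stmt_13_general h i A hA hi hih A' B hA' hB
end

section
/- For all positive integers k and n with n > k^2, let ℓ = ⌈n/k⌉ − k − 1 and q = n − k(k+ℓ). Then the number of monotone (k+1)-subsequences of the extremal permutation τ_{k,n} satisfies m_k(τ_{k,n}) = k·C(k+ℓ, k+1) + q·C(k+ℓ, k) = (q + kℓ/(k+1))·C(k+ℓ, k), and in particular m_k(τ_{k,n}) − m_k(τ_{k,n−1}) = C(k+ℓ, k). -/
/-!
Write `n = k·m + q` with `m = k + ℓ` and `0 < q ≤ k`: the permutation `τ_{k,n}` then has `q`
runs of length `m + 1` and `k − q` runs of length `m`, and Pascal's rule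
`C(m+1, k+1) = C(m, k) + C(m, k+1)` turns `m_k(τ_{k,n})` into `k·C(m, k+1) + q·C(m, k)`.
This closed form also holds for `q = 0`, so lowering `q` by one lowers `m_k` by `C(m, k)`;
the rational form is `C(k+ℓ, k+1) = ℓ/(k+1)·C(k+ℓ, k)`.
-/

/-- `m_k(τ_{k,n}) = r·C(⌈n/k⌉, k+1) + (k−r)·C(⌊n/k⌋, k+1)` with `r = n mod k`. -/
def mkTau (k n : ℕ) : ℕ :=
  n % k * Nat.choose ((n + k - 1) / k) (k + 1) + (k - n % k) * Nat.choose (n / k) (k + 1)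

theorem mkTau_mul_add_of_lt {k r : ℕ} (m : ℕ) (hr : r < k) :
    mkTau k (k * m + r) = r * (m + 1).choose (k + 1) + (k - r) * m.choose (k + 1) := by
  have hk : 0 < k := by omega
  have hdiv : (k * m + r) / k = m := by
    rw [Nat.mul_add_div hk, Nat.div_eq_of_lt hr, add_zero]
  have hmod : (k * m + r) % k = r := by rw [Nat.mul_add_mod, Nat.mod_eq_of_lt hr]
  rw [mkTau, hdiv, hmod]
  rcases Nat.eq_zero_or_pos r with rfl | hr0
  · simp
  · rw [show k * m + r + k - 1 = k * (m + 1) + (r - 1) by rw [Nat.mul_succ]; omega,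
      Nat.mul_add_div hk, Nat.div_eq_of_lt (by omega), add_zero]

theorem mkTau_mul_add {k q : ℕ} (m : ℕ) (hk : 0 < k) (hq : q ≤ k) :
    mkTau k (k * m + q) = k * m.choose (k + 1) + q * m.choose k := by
  rcases hq.lt_or_eq with hq | rfl
  · rw [mkTau_mul_add_of_lt m hq, Nat.choose_succ_succ']
    zify [hq.le]
    ring
  · rw [show q * m + q = q * (m + 1) + 0 by ring, mkTau_mul_add_of_lt _ hk,
      Nat.choose_succ_succ' m q, Nat.sub_zero, zero_mul, zero_add]
    ring

theorem cast_choose_succ_right (k ℓ : ℕ) :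
    ((k + ℓ).choose (k + 1) : ℝ) = ℓ / (k + 1) * (k + ℓ).choose k := by
  have h := Nat.choose_succ_right_eq (k + ℓ) k
  rw [Nat.add_sub_cancel_left] at h
  rw [div_mul_eq_mul_div, eq_div_iff (by positivity)]
  exact_mod_cast h.trans (mul_comm _ _)

theorem mul_add_sub_one_div_bounds {k : ℕ} (n : ℕ) (hk : 0 < k) :
    k * ((n + k - 1) / k) < n + k ∧ n ≤ k * ((n + k - 1) / k) := by
  have h1 := Nat.div_add_mod (n + k - 1) k
  have h2 := Nat.mod_lt (n + k - 1) hk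
  omega

/-- With `ℓ = ⌈n/k⌉ − k − 1` and `q = n − k(k+ℓ)`, one has
`m_k(τ_{k,n}) = k·C(k+ℓ, k+1) + q·C(k+ℓ, k) = (q + kℓ/(k+1))·C(k+ℓ, k)` and
`m_k(τ_{k,n}) − m_k(τ_{k,n−1}) = C(k+ℓ, k)`. -/
theorem stmt_14 (k n ℓ q : ℕ) (hk : 0 < k) (hn : k ^ 2 < n)
    (hℓ : ℓ = (n + k - 1) / k - k - 1) (hq : q = n - k * (k + ℓ)) :
    mkTau k n = k * Nat.choose (k + ℓ) (k + 1) + q * Nat.choose (k + ℓ) k ∧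
    (mkTau k n : ℝ) = ((q : ℝ) + (k : ℝ) * (ℓ : ℝ) / ((k : ℝ) + 1)) *
      (Nat.choose (k + ℓ) k : ℝ) ∧
    mkTau k n = mkTau k (n - 1) + Nat.choose (k + ℓ) k := by
  obtain ⟨hlt, hle⟩ := mul_add_sub_one_div_bounds n hk
  set c := (n + k - 1) / k
  have hc : k + 1 ≤ c := Nat.lt_of_mul_lt_mul_left (a := k) (by rw [← sq]; omega)
  have hkc : k * c = k * (k + ℓ) + k := by rw [← Nat.mul_succ]; congr 1; omega
  have hn_eq : n = k * (k + ℓ) + q := by omega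
  have hq_pos : 0 < q := by omega
  have hq_le : q ≤ k := by omega
  have h_closed := mkTau_mul_add (k + ℓ) hk hq_le
  rw [← hn_eq] at h_closed
  refine ⟨h_closed, ?_, ?_⟩
  · rw [h_closed]
    push_cast
    rw [cast_choose_succ_right]
    ring
  · rw [h_closed, show n - 1 = k * (k + ℓ) + (q - 1) by omega,
      mkTau_mul_add _ hk (by omega : q - 1 ≤ k)]
    zify [hq_pos]
    ring
end

section
/- For n = k^2 + k + 1, the permutation σ_k^1 (defined below) contains exactly 2k monotone increasing subsequences of length k+1 and exactly 1 decreasing subsequence of length k+1; in particular it achieves m_k(σ_k^1) = 2k+1 while containing monotone (k+1)-subsequences of both types. -/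
/-!
Split the positions of `σ_k^1` into blocks `0, 1, …, k`: block `0` is the first position and
block `h ≥ 1` consists of the `k + 1` positions `(h-1)(k+1)+1, …, h(k+1)` (the paper's first row
is blocks `0` and `1`, its later rows are blocks `2, …, k`). The permutation increases inside
every block. Call the first entry of a block its head and the other `k` entries its tail. Heads
decrease from block to block, tails decrease as whole blocks, and head `h` lies below tail `h'`
exactly when `h' ≤ h + 1`.

An increasing subsequence therefore uses at most one head and at most one tail, so one of
length `k + 1` is a head `h` followed by a full tail `h'` with `h ≤ h' ≤ h + 1`: `2k` choices.
A decreasing one meets every block exactly once, and it must take the head each time: if it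
took from block `h + 1` a tail entry after the head of block `h`, that entry would be larger.
So it is the sequence of heads.
-/

/-- The value at (0-indexed) position `p` of the permutation `σ_k^1` of `[k²+k+1]`:
the first row is `k²+1, k²−k, k²+2, …, k²+k+1`; then for `m = k−1` down to `2` the row
`2+(m−2)(k+1), (m−1)(k+1)+3, …, m(k+1)+1`; and the last row is `1, 3, 4, …, k+2`. -/
def sigmaOne (k p : ℕ) : ℕ :=
  if p = 0 then k ^ 2 + 1
  else if p = 1 then k ^ 2 - k
  else if p ≤ k + 1 then k ^ 2 + p
  else
    let q := p - (k + 2)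
    let m := k - 1 - q / (k + 1)
    let o := q % (k + 1)
    if o = 0 then (if m = 1 then 1 else 2 + (m - 2) * (k + 1))
    else if m = 1 then o + 2
    else (m - 1) * (k + 1) + 2 + o

theorem Nat.mul_add_lt_mul_add {K a b c d : ℕ} (hab : a < b) (hc : c < K + d) :
    a * K + c < b * K + d := by
  have := Nat.mul_le_mul_right K (Nat.succ_le_of_lt hab)
  rw [Nat.succ_mul] at this
  omega

theorem Nat.mul_add_lt_mul_add_iff {K a b c d : ℕ} (hc : c < K) (hd : d < K) :
    a * K + c < b * K + d ↔ a < b ∨ a = b ∧ c < d := by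
  refine ⟨fun h => ?_, ?_⟩
  · rcases lt_trichotomy a b with hab | rfl | hab
    · exact Or.inl hab
    · exact Or.inr ⟨rfl, by omega⟩
    · have := mul_add_lt_mul_add (K := K) (c := d) (d := c) hab (by omega)
      omega
  · rintro (hab | ⟨rfl, hcd⟩)
    · exact mul_add_lt_mul_add hab (by omega)
    · omega

theorem StrictMonoOn.subsingleton_of_strictAntiOn {α β : Type*} [LinearOrder α] [Preorder β]
    {f : α → β} {s : Set α} (hmono : StrictMonoOn f s) (hanti : StrictAntiOn f s) :
    s.Subsingleton := by
  intro a ha b hb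
  by_contra hne
  rcases lt_or_gt_of_ne hne with hab | hab
  · exact (hmono ha hb hab).asymm (hanti ha hb hab)
  · exact (hmono hb ha hab).asymm (hanti hb ha hab)

open Finset

namespace SigmaOne

variable {k : ℕ}

def block (k p : ℕ) : ℕ := if p = 0 then 0 else (p - 1) / (k + 1) + 1

def offset (k p : ℕ) : ℕ := if p = 0 then 0 else (p - 1) % (k + 1)

lemma offset_le (p : ℕ) : offset k p ≤ k := by
  unfold offset
  split_ifs
  · omega
  · exact Nat.le_of_lt_succ (Nat.mod_lt _ (by omega : 0 < k + 1))

lemma offset_eq_zero_of_block_eq_zero {p : ℕ} (h : block k p = 0) : offset k p = 0 := by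
  unfold block at h
  split_ifs at h with hp
  simp [offset, hp]

lemma block_le {p : ℕ} (hp : p < k ^ 2 + k + 1) : block k p ≤ k := by
  unfold block
  split_ifs
  · omega
  · have : k * (k + 1) = k ^ 2 + k := by ring
    have : (p - 1) / (k + 1) < k := (Nat.div_lt_iff_lt_mul (by omega)).mpr (by omega)
    omega

lemma lt_iff_block_offset {p q : ℕ} :
    p < q ↔ block k p < block k q ∨ block k p = block k q ∧ offset k p < offset k q := by
  unfold block offset
  rcases Nat.eq_zero_or_pos p with rfl | hp <;> rcases Nat.eq_zero_or_pos q with rfl | hq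
  · simp
  · simp [hq.ne', hq]
  · simp [hp.ne']
  · have := Nat.mul_add_lt_mul_add_iff (a := (p - 1) / (k + 1)) (b := (q - 1) / (k + 1))
      (Nat.mod_lt (p - 1) (by omega : 0 < k + 1)) (Nat.mod_lt (q - 1) (by omega : 0 < k + 1))
    rw [Nat.div_add_mod', Nat.div_add_mod'] at this
    simp only [hp.ne', hq.ne', if_false, add_lt_add_iff_right, add_left_inj]
    omega

lemma fin_lt_iff_block_offset {p q : Fin (k ^ 2 + k + 1)} :
    p < q ↔ block k p < block k q ∨ block k p = block k q ∧ offset k p < offset k q :=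
  Fin.lt_def.trans lt_iff_block_offset

lemma eq_of_block_eq_of_offset_eq {p q : ℕ} (hb : block k p = block k q)
    (ho : offset k p = offset k q) : p = q := by
  rcases lt_trichotomy p q with h | h | h
  · rw [lt_iff_block_offset (k := k)] at h; omega
  · exact h
  · rw [lt_iff_block_offset (k := k)] at h; omega

lemma block_offset_eq {p h t : ℕ} (hh : 1 ≤ h) (ht : t ≤ k)
    (hp : p = (h - 1) * (k + 1) + t + 1) : block k p = h ∧ offset k p = t := by
  have hdm := (Nat.div_mod_unique (a := p - 1) (d := h - 1) (c := t) (by omega : 0 < k + 1)).mpr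
    ⟨by rw [hp, mul_comm]; omega, by omega⟩
  unfold block offset
  rw [if_neg (by omega), if_neg (by omega), hdm.1, hdm.2]
  omega

def cellValue (k h t : ℕ) : ℕ :=
  if t = 0 then (if h = k then 1 else (k - 1 - h) * (k + 1) + 2)
  else (k - h) * (k + 1) + 2 + t

lemma sigmaOne_mul_add (hk : 2 ≤ k) {q r : ℕ} (hq : q + 2 ≤ k) (hr : r < k + 1) :
    sigmaOne k (q * (k + 1) + r + (k + 2)) = cellValue k (q + 2) r := by
  have hdm := (Nat.div_mod_unique (a := q * (k + 1) + r) (d := q) (c := r)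
    (by omega : 0 < k + 1)).mpr ⟨by ring, hr⟩
  unfold sigmaOne cellValue
  simp only [if_neg (by omega : q * (k + 1) + r + (k + 2) ≠ 0),
    if_neg (by omega : q * (k + 1) + r + (k + 2) ≠ 1),
    if_neg (by omega : ¬ q * (k + 1) + r + (k + 2) ≤ k + 1), Nat.add_sub_cancel, hdm.1, hdm.2,
    show k - 1 - q - 2 = k - 1 - (q + 2) by omega, show k - 1 - q - 1 = k - (q + 2) by omega,
    show k - 1 - q = 1 ↔ q + 2 = k by omega]
  split_ifs with _ hqk hqk
  · rfl
  · omega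
  · simp [← hqk]
    omega
  · omega

lemma sigmaOne_eq_cellValue (hk : 2 ≤ k) {p : ℕ} (hp : p < k ^ 2 + k + 1) :
    sigmaOne k p = cellValue k (block k p) (offset k p) := by
  have hsq1 : (k - 1) * (k + 1) + 1 = k ^ 2 := by
    obtain ⟨m, rfl⟩ : ∃ m, k = m + 1 := ⟨k - 1, by omega⟩
    simp only [Nat.add_sub_cancel]; ring
  have hsq2 : (k - 2) * (k + 1) + k + 2 = k ^ 2 := by
    obtain ⟨m, rfl⟩ : ∃ m, k = m + 2 := ⟨k - 2, by omega⟩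
    simp only [Nat.add_sub_cancel]; ring
  rcases Nat.lt_or_ge p 2 with hp2 | hp2
  · interval_cases p
    · simp only [sigmaOne, cellValue, block, offset, if_true, if_neg (by omega : 0 ≠ k),
        Nat.sub_zero]
      omega
    · obtain ⟨hblock, hoffset⟩ := block_offset_eq (k := k) (p := 1) (h := 1) (t := 0) le_rfl
        (Nat.zero_le _) (by simp)
      simp only [hblock, hoffset, sigmaOne, cellValue, if_true, if_neg (by omega : 1 ≠ k),
        one_ne_zero, if_false, show k - 1 - 1 = k - 2 by omega]
      omega
  rcases Nat.lt_or_ge p (k + 2) with hsmall | hlarge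
  · obtain ⟨hblock, hoffset⟩ := block_offset_eq (k := k) (p := p) (h := 1) (t := p - 1) le_rfl
      (by omega) (by omega)
    rw [hblock, hoffset]
    unfold sigmaOne cellValue
    rw [if_neg (by omega), if_neg (by omega), if_pos (by omega), if_neg (by omega)]
    omega
  · obtain ⟨q, r, hr, rfl⟩ : ∃ q r, r < k + 1 ∧ p = q * (k + 1) + r + (k + 2) :=
      ⟨_, _, Nat.mod_lt (p - (k + 2)) (by omega), by rw [Nat.div_add_mod']; omega⟩
    obtain ⟨hblock, hoffset⟩ := block_offset_eq (k := k) (p := q * (k + 1) + r + (k + 2))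
      (h := q + 2) (t := r) (by omega) (by omega)
      (by rw [show q + 2 - 1 = q + 1 by omega, add_one_mul]; omega)
    have hq := block_le hp
    rw [hblock] at hq ⊢
    rw [hoffset]
    exact sigmaOne_mul_add hk hq hr

lemma cellValue_lt_cellValue_of_offset_lt {h t t' : ℕ} (hh : h ≤ k) (htt : t < t') :
    cellValue k h t < cellValue k h t' := by
  unfold cellValue
  rw [if_neg (show t' ≠ 0 by omega)]
  split_ifs
  · omega
  · have := Nat.mul_add_lt_mul_add (K := k + 1) (c := 2) (d := 2 + t')
      (show k - 1 - h < k - h by omega) (by omega)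
    omega
  · omega

lemma cellValue_zero_lt_cellValue_zero {h h' : ℕ} (hh : h < h') (hh' : h' ≤ k) :
    cellValue k h' 0 < cellValue k h 0 := by
  unfold cellValue
  simp only [if_true, if_neg (by omega : h ≠ k)]
  split_ifs
  · omega
  · exact Nat.mul_add_lt_mul_add (by omega) (by omega)

lemma cellValue_lt_cellValue_of_block_lt {h h' t t' : ℕ} (ht : t ≠ 0) (ht' : t' ≠ 0)
    (ht'k : t' ≤ k) (hh : h < h') (hh' : h' ≤ k) :
    cellValue k h' t' < cellValue k h t := by
  unfold cellValue
  rw [if_neg ht, if_neg ht']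
  have := Nat.mul_add_lt_mul_add (K := k + 1) (c := 2 + t') (d := 2 + t)
    (show k - h' < k - h by omega) (by omega)
  omega

lemma cellValue_zero_lt_iff {h h' t : ℕ} (ht : t ≠ 0) (htk : t ≤ k) (hh : h ≤ k)
    (hh' : h' ≤ k) :
    cellValue k h 0 < cellValue k h' t ↔ h' ≤ h + 1 := by
  unfold cellValue
  rw [if_neg ht, if_pos rfl]
  split_ifs
  · omega
  constructor
  · intro hlt
    by_contra hgt
    have := Nat.mul_add_lt_mul_add (K := k + 1) (c := 2 + t) (d := 2)
      (show k - h' < k - 1 - h by omega) (by omega)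
    omega
  · intro hle
    have := Nat.mul_le_mul_right (k + 1) (show k - 1 - h ≤ k - h' by omega)
    omega

def coord (p : Fin (k ^ 2 + k + 1)) : ℕ × ℕ := (block k p, offset k p)

lemma coord_injective : Function.Injective (coord (k := k)) := fun _ _ hpq =>
  Fin.ext (eq_of_block_eq_of_offset_eq (Prod.ext_iff.mp hpq).1 (Prod.ext_iff.mp hpq).2)

def cells (k : ℕ) : Finset (ℕ × ℕ) := insert (0, 0) (Icc 1 k ×ˢ range (k + 1))

lemma coord_mem_cells (p : Fin (k ^ 2 + k + 1)) : coord p ∈ cells k := by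
  have hb := block_le p.isLt
  have ho := offset_le (k := k) p
  have h0 := offset_eq_zero_of_block_eq_zero (k := k) (p := p)
  simp only [coord, cells, mem_insert, Prod.ext_iff, mem_product, mem_Icc, mem_range]
  omega

lemma image_coord_univ : univ.image (coord (k := k)) = cells k := by
  refine eq_of_subset_of_card_le (image_subset_iff.mpr fun p _ => coord_mem_cells p) ?_
  rw [card_image_of_injective _ coord_injective, card_univ, Fintype.card_fin, cells,
    card_insert_of_notMem (by simp), card_product, Nat.card_Icc, card_range, Nat.add_sub_cancel]
  nlinarith

def cellSet (k : ℕ) (C : Finset (ℕ × ℕ)) : Finset (Fin (k ^ 2 + k + 1)) :=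
  univ.filter fun p => coord p ∈ C

lemma exists_coord_eq {c : ℕ × ℕ} (hc : c ∈ cells k) :
    ∃ p : Fin (k ^ 2 + k + 1), coord p = c := by
  obtain ⟨p, -, hp⟩ := mem_image.mp (image_coord_univ (k := k) ▸ hc)
  exact ⟨p, hp⟩

lemma image_coord_cellSet {C : Finset (ℕ × ℕ)} (hC : C ⊆ cells k) :
    (cellSet k C).image coord = C := by
  ext c
  simp only [cellSet, mem_image, mem_filter, mem_univ, true_and]
  refine ⟨fun ⟨p, hp, hpc⟩ => hpc ▸ hp, fun hc => ?_⟩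
  obtain ⟨p, hp⟩ := exists_coord_eq (hC hc)
  exact ⟨p, hp ▸ hc, hp⟩

lemma card_cellSet {C : Finset (ℕ × ℕ)} (hC : C ⊆ cells k) :
    (cellSet k C).card = C.card := by
  rw [← card_image_of_injective _ coord_injective, image_coord_cellSet hC]

lemma eq_cellSet_of_card_le {s : Finset (Fin (k ^ 2 + k + 1))} {C : Finset (ℕ × ℕ)}
    (hs : ∀ p ∈ s, coord p ∈ C) (hC : C.card ≤ s.card) : s = cellSet k C := by
  have himage : s.image coord = C := eq_of_subset_of_card_le (image_subset_iff.mpr hs)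
    (by rwa [card_image_of_injective _ coord_injective])
  ext p
  simp [cellSet, ← himage, coord_injective.eq_iff]

def incCells (k h h' : ℕ) : Finset (ℕ × ℕ) := insert (h, 0) ({h'} ×ˢ Icc 1 k)

lemma incCells_subset_cells {h h' : ℕ} (hh : h ≤ k) (hh' : 1 ≤ h') (hh'k : h' ≤ k) :
    incCells k h h' ⊆ cells k := by
  intro c hc
  simp only [incCells, cells, mem_insert, mem_product, mem_singleton, mem_Icc, mem_range,
    Prod.ext_iff] at hc ⊢
  omega

def headCells (k : ℕ) : Finset (ℕ × ℕ) := range (k + 1) ×ˢ {0}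

lemma headCells_subset_cells : headCells k ⊆ cells k := by
  intro c hc
  simp only [headCells, cells, mem_insert, mem_product, mem_singleton, mem_Icc, mem_range,
    Prod.ext_iff] at hc ⊢
  omega

section Subsequences

variable {s : Finset (Fin (k ^ 2 + k + 1))}

lemma block_eq_of_strictMonoOn (hk : 2 ≤ k)
    (hs : StrictMonoOn (fun p : Fin (k ^ 2 + k + 1) => sigmaOne k p) s)
    {a b : Fin (k ^ 2 + k + 1)} (ha : a ∈ s) (hb : b ∈ s)
    (hab : offset k a = 0 ↔ offset k b = 0) : block k a = block k b := by
  have key : ∀ a ∈ s, ∀ b ∈ s,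
      (offset k a = 0 ↔ offset k b = 0) → ¬ block k a < block k b := by
    intro a ha b hb hab hlt
    have hval := hs ha hb (fin_lt_iff_block_offset.mpr (Or.inl hlt))
    simp only [sigmaOne_eq_cellValue hk a.isLt, sigmaOne_eq_cellValue hk b.isLt] at hval
    by_cases ha0 : offset k a = 0
    · rw [ha0, hab.mp ha0] at hval
      exact (cellValue_zero_lt_cellValue_zero hlt (block_le b.isLt)).not_gt hval
    · exact (cellValue_lt_cellValue_of_block_lt ha0 (mt hab.mpr ha0) (offset_le _) hlt
        (block_le b.isLt)).not_gt hval
  rcases lt_trichotomy (block k a) (block k b) with hlt | heq | hgt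
  · exact absurd hlt (key a ha b hb hab)
  · exact heq
  · exact absurd hgt (key b hb a ha hab.symm)

lemma exists_eq_cellSet_incCells (hk : 2 ≤ k) (hcard : s.card = k + 1)
    (hs : StrictMonoOn (fun p : Fin (k ^ 2 + k + 1) => sigmaOne k p) s) :
    ∃ h h', 1 ≤ h' ∧ h' ≤ k ∧ h ≤ h' ∧ h' ≤ h + 1 ∧
      s = cellSet k (incCells k h h') := by
  have hinj : Set.InjOn (fun p : Fin (k ^ 2 + k + 1) => offset k p) s := fun a ha b hb hab =>
    coord_injective (Prod.ext (block_eq_of_strictMonoOn hk hs ha hb (by simp_all)) hab)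
  have hsurj := surjOn_of_injOn_of_card_le (s := s) (t := range (k + 1)) _
    (fun p _ => mem_range.mpr (Nat.lt_succ_of_le (offset_le p))) hinj (by rw [card_range, hcard])
  obtain ⟨x, hx, hx0 : offset k x = 0⟩ := hsurj (mem_range.mpr (Nat.succ_pos k))
  obtain ⟨y, hy, hy1 : offset k y = 1⟩ := hsurj (mem_range.mpr (by omega : 1 < k + 1))
  have hyk := block_le y.isLt
  have hy0 : block k y ≠ 0 := fun h => by simp [offset_eq_zero_of_block_eq_zero h] at hy1
  have hx_uniq : ∀ a ∈ s, offset k a = 0 → a = x := fun a ha ha0 =>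
    hinj ha hx (ha0.trans hx0.symm)
  have hy_block : ∀ a ∈ s, offset k a ≠ 0 → block k a = block k y := fun a ha ha0 =>
    block_eq_of_strictMonoOn hk hs ha hy (by omega)
  have hxy : sigmaOne k x < sigmaOne k y ↔ block k y ≤ block k x + 1 := by
    rw [sigmaOne_eq_cellValue hk x.isLt, sigmaOne_eq_cellValue hk y.isLt, hx0, hy1]
    exact cellValue_zero_lt_iff one_ne_zero (by omega) (block_le x.isLt) hyk
  have hle : block k x ≤ block k y := by
    by_contra hlt
    exact (hs hy hx (fin_lt_iff_block_offset.mpr (Or.inl (by omega)))).not_gt (hxy.mpr (by omega))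
  have hle' : block k y ≤ block k x + 1 :=
    hxy.mp (hs hx hy (fin_lt_iff_block_offset.mpr (by omega)))
  refine ⟨block k x, block k y, by omega, hyk, hle, hle',
    eq_cellSet_of_card_le (fun a ha => ?_) ?_⟩
  · by_cases ha0 : offset k a = 0
    · rw [hx_uniq a ha ha0, incCells, coord, hx0]
      exact mem_insert_self _ _
    · have := offset_le (k := k) a
      simp only [incCells, coord, mem_insert, Prod.ext_iff, mem_product, mem_singleton, mem_Icc,
        hy_block a ha ha0, true_and]
      omega
  · rw [incCells, card_insert_of_notMem (by simp), card_product, card_singleton, Nat.card_Icc,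
      hcard]
    omega

lemma strictMonoOn_cellSet_incCells {h h' : ℕ} (hk : 2 ≤ k) (hh' : h' ≤ k) (hle : h ≤ h')
    (hle' : h' ≤ h + 1) :
    StrictMonoOn (fun p : Fin (k ^ 2 + k + 1) => sigmaOne k p) (cellSet k (incCells k h h')) := by
  intro a ha b hb hab
  simp only [cellSet, incCells, mem_coe, mem_filter, mem_univ, true_and, mem_insert,
    coord, Prod.ext_iff, mem_product, mem_singleton, mem_Icc] at ha hb
  have hlt := fin_lt_iff_block_offset.mp hab
  simp only [sigmaOne_eq_cellValue hk a.isLt, sigmaOne_eq_cellValue hk b.isLt]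
  rcases ha with ⟨ha, ha0⟩ | ⟨ha, ha0, -⟩ <;>
    rcases hb with ⟨hb, hb0⟩ | ⟨hb, hb0, hbk⟩
  · omega
  · rw [ha0, ha, hb]
    exact (cellValue_zero_lt_iff (by omega) hbk (by omega) hh').mpr hle'
  · omega
  · rw [ha, hb] at hlt ⊢
    exact cellValue_lt_cellValue_of_offset_lt hh' (by omega)

lemma block_injOn_of_strictAntiOn (hk : 2 ≤ k)
    (hs : StrictAntiOn (fun p : Fin (k ^ 2 + k + 1) => sigmaOne k p) s) :
    Set.InjOn (fun p : Fin (k ^ 2 + k + 1) => block k p) s := by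
  have key : ∀ a ∈ s, ∀ b ∈ s, block k a = block k b → ¬ offset k a < offset k b := by
    intro a ha b hb hab hlt
    have hval := hs ha hb (fin_lt_iff_block_offset.mpr (Or.inr ⟨hab, hlt⟩))
    simp only [sigmaOne_eq_cellValue hk a.isLt, sigmaOne_eq_cellValue hk b.isLt, hab] at hval
    exact (cellValue_lt_cellValue_of_offset_lt (block_le b.isLt) hlt).not_gt hval
  intro a ha b hb hab
  have := key a ha b hb hab
  have := key b hb a ha hab.symm
  exact coord_injective (Prod.ext hab (show offset k a = offset k b by omega))

lemma eq_cellSet_headCells (hk : 2 ≤ k) (hcard : s.card = k + 1)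
    (hs : StrictAntiOn (fun p : Fin (k ^ 2 + k + 1) => sigmaOne k p) s) :
    s = cellSet k (headCells k) := by
  have hsurj := surjOn_of_injOn_of_card_le (s := s) (t := range (k + 1)) _
    (fun p _ => mem_range.mpr (Nat.lt_succ_of_le (block_le p.isLt)))
    (block_injOn_of_strictAntiOn hk hs) (by rw [card_range, hcard])
  have hhead : ∀ h, ∀ a ∈ s, block k a = h → offset k a = 0 := by
    intro h
    induction h with
    | zero => exact fun a _ ha => offset_eq_zero_of_block_eq_zero ha
    | succ h ih =>
      intro a ha hah
      by_contra ha0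
      obtain ⟨b, hb, hbh : block k b = h⟩ :=
        hsurj (mem_range.mpr (show h < k + 1 by have := block_le a.isLt; omega))
      have hval := hs hb ha (fin_lt_iff_block_offset.mpr (Or.inl (by omega)))
      simp only [sigmaOne_eq_cellValue hk a.isLt, sigmaOne_eq_cellValue hk b.isLt, ih b hb hbh]
        at hval
      exact hval.not_gt ((cellValue_zero_lt_iff ha0 (offset_le _) (block_le b.isLt)
        (block_le a.isLt)).mpr (by omega))
  refine eq_cellSet_of_card_le (fun a ha => ?_) ?_
  · simp only [headCells, coord, mem_product, mem_range, mem_singleton, hhead _ a ha rfl,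
      and_true]
    exact Nat.lt_succ_of_le (block_le a.isLt)
  · rw [headCells, card_product, card_range, card_singleton, hcard, mul_one]

lemma strictAntiOn_cellSet_headCells (hk : 2 ≤ k) :
    StrictAntiOn (fun p : Fin (k ^ 2 + k + 1) => sigmaOne k p) (cellSet k (headCells k)) := by
  intro a ha b hb hab
  simp only [cellSet, headCells, mem_coe, mem_filter, mem_univ, true_and, coord, mem_product,
    mem_range, mem_singleton] at ha hb
  have hlt := fin_lt_iff_block_offset.mp hab
  simp only [sigmaOne_eq_cellValue hk a.isLt, sigmaOne_eq_cellValue hk b.isLt, ha.2, hb.2]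
  exact cellValue_zero_lt_cellValue_zero (by omega) (by omega)

lemma eq_cellSet_headCells_iff (hk : 2 ≤ k) :
    s.card = k + 1 ∧ StrictAntiOn (fun p : Fin (k ^ 2 + k + 1) => sigmaOne k p) s ↔
      s = cellSet k (headCells k) := by
  refine ⟨fun ⟨hcard, hs⟩ => eq_cellSet_headCells hk hcard hs, ?_⟩
  rintro rfl
  refine ⟨?_, strictAntiOn_cellSet_headCells hk⟩
  rw [card_cellSet headCells_subset_cells, headCells, card_product, card_range, card_singleton,
    mul_one]

end Subsequences

/-- `(j, e)` stands for the tail of block `j + 1` preceded by the head of block `j + e`. -/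
def incFamily (k : ℕ) : Finset (Finset (Fin (k ^ 2 + k + 1))) :=
  (range k ×ˢ range 2).image fun je => cellSet k (incCells k (je.1 + je.2) (je.1 + 1))

lemma mem_incFamily_iff (hk : 2 ≤ k) {s : Finset (Fin (k ^ 2 + k + 1))} :
    s ∈ incFamily k ↔
      s.card = k + 1 ∧ StrictMonoOn (fun p : Fin (k ^ 2 + k + 1) => sigmaOne k p) s := by
  constructor
  · simp only [incFamily, mem_image, mem_product, mem_range, Prod.exists]
    rintro ⟨j, e, ⟨hj, he⟩, rfl⟩
    refine ⟨?_, strictMonoOn_cellSet_incCells hk (by omega) (by omega) (by omega)⟩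
    rw [card_cellSet (incCells_subset_cells (by omega) (by omega) (by omega)), incCells,
      card_insert_of_notMem (by simp), card_product, card_singleton, Nat.card_Icc]
    omega
  · rintro ⟨hcard, hs⟩
    obtain ⟨h, h', hh', hh'k, hle, hle', rfl⟩ := exists_eq_cellSet_incCells hk hcard hs
    refine mem_image.mpr ⟨(h' - 1, h + 1 - h'), ?_, ?_⟩
    · simp only [mem_product, mem_range]
      omega
    · congr 2 <;> omega

lemma card_incFamily (hk : 2 ≤ k) : (incFamily k).card = 2 * k := by
  rw [incFamily, card_image_of_injOn, card_product, card_range, card_range, mul_comm]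
  rintro ⟨j, e⟩ hje ⟨j', e'⟩ hje' heq
  simp only [coe_product, coe_range, Set.mem_prod, Set.mem_Iio] at hje hje' heq
  have hC := congrArg (Finset.image coord) heq
  rw [image_coord_cellSet (incCells_subset_cells (by omega) (by omega) (by omega)),
    image_coord_cellSet (incCells_subset_cells (by omega) (by omega) (by omega))] at hC
  have h1 : (j + e, 0) ∈ incCells k (j' + e') (j' + 1) := hC ▸ mem_insert_self _ _
  have h2 : (j + 1, 1) ∈ incCells k (j' + e') (j' + 1) :=
    hC ▸ mem_insert_of_mem
      (mem_product.mpr ⟨mem_singleton_self _, mem_Icc.mpr ⟨le_rfl, by omega⟩⟩)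
  simp only [incCells, mem_insert, mem_product, mem_singleton, mem_Icc, Prod.ext_iff] at h1 h2
  ext <;> simp only <;> omega

end SigmaOne

open SigmaOne in
/-- For `n = k²+k+1`, the permutation `σ_k^1` contains exactly `2k` increasing
subsequences of length `k+1` and exactly one decreasing subsequence of length `k+1`;
in particular `m_k(σ_k^1) = 2k+1`, with monotone `(k+1)`-subsequences of both types. -/
theorem stmt_19 (k : ℕ) (hk : 2 ≤ k) :
    Set.ncard {s : Finset (Fin (k ^ 2 + k + 1)) | s.card = k + 1 ∧
        StrictMonoOn (fun p : Fin (k ^ 2 + k + 1) => sigmaOne k p)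
          (↑s : Set (Fin (k ^ 2 + k + 1)))} = 2 * k ∧
    Set.ncard {s : Finset (Fin (k ^ 2 + k + 1)) | s.card = k + 1 ∧
        StrictAntiOn (fun p : Fin (k ^ 2 + k + 1) => sigmaOne k p)
          (↑s : Set (Fin (k ^ 2 + k + 1)))} = 1 ∧
    Set.ncard {s : Finset (Fin (k ^ 2 + k + 1)) | s.card = k + 1 ∧
        (StrictMonoOn (fun p : Fin (k ^ 2 + k + 1) => sigmaOne k p)
            (↑s : Set (Fin (k ^ 2 + k + 1))) ∨
          StrictAntiOn (fun p : Fin (k ^ 2 + k + 1) => sigmaOne k p)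
            (↑s : Set (Fin (k ^ 2 + k + 1))))} = 2 * k + 1 := by
  have hinc : {s : Finset (Fin (k ^ 2 + k + 1)) | s.card = k + 1 ∧
      StrictMonoOn (fun p : Fin (k ^ 2 + k + 1) => sigmaOne k p) s} = ↑(incFamily k) :=
    Set.ext fun _ => (mem_incFamily_iff hk).symm
  have hdec : {s : Finset (Fin (k ^ 2 + k + 1)) | s.card = k + 1 ∧
      StrictAntiOn (fun p : Fin (k ^ 2 + k + 1) => sigmaOne k p) s} =
      {cellSet k (headCells k)} :=
    Set.ext fun _ => eq_cellSet_headCells_iff hk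
  have hdisj : Disjoint {s : Finset (Fin (k ^ 2 + k + 1)) | s.card = k + 1 ∧
      StrictMonoOn (fun p : Fin (k ^ 2 + k + 1) => sigmaOne k p) s}
      {s | s.card = k + 1 ∧ StrictAntiOn (fun p : Fin (k ^ 2 + k + 1) => sigmaOne k p) s} :=
    Set.disjoint_left.mpr fun s ⟨hcard, hmono⟩ ⟨_, hanti⟩ =>
      (one_lt_card_iff_nontrivial.mp (by omega)).not_subsingleton
        (hmono.subsingleton_of_strictAntiOn hanti)
  simp only [and_or_left, Set.ofPred_or]
  rw [Set.ncard_union_eq hdisj, hinc, hdec, Set.ncard_coe_finset, Set.ncard_singleton,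
    card_incFamily hk]
  exact ⟨rfl, rfl, rfl⟩
end
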